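/- arXiv:2511.01033 — 5 statements merged into one kernel-verified Lean document; each statement's English description precedes it below -/
import Mathlib

section
/- Let k ≥ 1 and let A be a real 2k×2k matrix. If F·A·Fᵀ = A holds for every block-orthogonal matrix F ∈ ℝ^{2k×2k}, then there exist real numbers α and β such that, in k×k blocks, A = [[α·I, β·I],[β·I, α·I]], where I is the k×k identity matrix. -/
/-!
Conjugation by the block-diagonal matrices `diag(E, E)` acts blockwise, so each `k×k` block of
`A` commutes with every orthogonal matrix; reflections in a coordinate force such a block to be
diagonal and transpositions force its diagonal to be constant. Conjugation by the block swap
`[[0, I], [I, 0]]` exchanges the two diagonal blocks and the two off-diagonal blocks.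
-/

open Matrix

/-- A matrix `E` is orthogonal if `E·Eᵀ = Eᵀ·E = 1`. -/
def IsOrthoMat {m : Type*} [Fintype m] [DecidableEq m] (E : Matrix m m ℝ) : Prop :=
  E * Eᵀ = 1 ∧ Eᵀ * E = 1

/-- A `2k×2k` matrix `F` is block-orthogonal if, for some orthogonal `k×k` matrix `E₀`,
either `F = [[E₀,0],[0,E₀]]` or `F = [[0,E₀],[E₀,0]]` in `k×k` blocks. -/
def IsBlockOrthoMat {k : ℕ} (F : Matrix (Fin k ⊕ Fin k) (Fin k ⊕ Fin k) ℝ) : Prop :=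
  ∃ E₀ : Matrix (Fin k) (Fin k) ℝ, IsOrthoMat E₀ ∧
    (F = Matrix.fromBlocks E₀ 0 0 E₀ ∨ F = Matrix.fromBlocks 0 E₀ E₀ 0)

section

variable {m R : Type*} [Fintype m] [DecidableEq m]

theorem isOrthoMat_permMatrix (σ : Equiv.Perm m) : IsOrthoMat (σ.permMatrix ℝ) := by
  constructor <;> simp [← permMatrix_mul]

theorem isOrthoMat_diagonal {d : m → ℝ} (hd : ∀ i, d i * d i = 1) :
    IsOrthoMat (diagonal d) := by
  have hsq : diagonal d * diagonal d = 1 := by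
    rw [diagonal_mul_diagonal, funext hd, diagonal_one]
  simpa [IsOrthoMat] using hsq

theorem permMatrix_mul_mul_transpose [NonAssocSemiring R] (σ : Equiv.Perm m) (M : Matrix m m R) :
    σ.permMatrix R * M * (σ.permMatrix R)ᵀ = M.submatrix σ σ := by
  rw [transpose_permMatrix, PEquiv.toMatrix_toPEquiv_mul, PEquiv.mul_toMatrix_toPEquiv]
  rfl

theorem apply_eq_zero_of_forall_isOrthoMat_conj {M : Matrix m m ℝ}
    (hM : ∀ E, IsOrthoMat E → E * M * Eᵀ = M) {i j : m} (hij : i ≠ j) : M i j = 0 := by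
  -- conjugating by the reflection in the `i`-th coordinate negates `M i j`
  have h := congrFun₂ (hM _ (isOrthoMat_diagonal (d := fun l => if l = i then -1 else 1)
    (fun l => by split_ifs <;> norm_num))) i j
  simp only [diagonal_transpose, mul_diagonal, diagonal_mul, ↓reduceIte, neg_mul, one_mul,
    hij.symm, mul_one] at h
  linarith

theorem apply_self_eq_of_forall_isOrthoMat_conj {M : Matrix m m ℝ}
    (hM : ∀ E, IsOrthoMat E → E * M * Eᵀ = M) (i j : m) : M i i = M j j := by
  have h := hM _ (isOrthoMat_permMatrix (Equiv.swap i j))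
  rw [permMatrix_mul_mul_transpose] at h
  simpa using congrFun₂ h j j

theorem exists_eq_smul_one_of_forall_isOrthoMat_conj (M : Matrix m m ℝ)
    (hM : ∀ E, IsOrthoMat E → E * M * Eᵀ = M) : ∃ c : ℝ, M = c • 1 := by
  rcases isEmpty_or_nonempty m with hm | ⟨⟨i₀⟩⟩
  · exact ⟨0, Subsingleton.elim _ _⟩
  refine ⟨M i₀ i₀, ext fun i j => ?_⟩
  rcases eq_or_ne i j with rfl | hij
  · simp [apply_self_eq_of_forall_isOrthoMat_conj hM i i₀]
  · simp [apply_eq_zero_of_forall_isOrthoMat_conj hM hij, hij]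

end

section

variable {n R : Type*} [Fintype n] [Ring R]

theorem fromBlocks_diag_conj (E P Q S T : Matrix n n R) :
    fromBlocks E 0 0 E * fromBlocks P Q S T * (fromBlocks E 0 0 E)ᵀ =
      fromBlocks (E * P * Eᵀ) (E * Q * Eᵀ) (E * S * Eᵀ) (E * T * Eᵀ) := by
  simp [fromBlocks_transpose, fromBlocks_multiply]

theorem fromBlocks_swap_conj [DecidableEq n] (P Q S T : Matrix n n R) :
    fromBlocks 0 1 1 0 * fromBlocks P Q S T * (fromBlocks 0 1 1 0)ᵀ = fromBlocks T S Q P := by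
  simp [fromBlocks_transpose, fromBlocks_multiply]

end

theorem stmt1_general (k : ℕ) (A : Matrix (Fin k ⊕ Fin k) (Fin k ⊕ Fin k) ℝ)
    (h : ∀ F : Matrix (Fin k ⊕ Fin k) (Fin k ⊕ Fin k) ℝ, IsBlockOrthoMat F →
      F * A * Fᵀ = A) :
    ∃ α β : ℝ, A = Matrix.fromBlocks
      (α • (1 : Matrix (Fin k) (Fin k) ℝ)) (β • (1 : Matrix (Fin k) (Fin k) ℝ))
      (β • (1 : Matrix (Fin k) (Fin k) ℝ)) (α • (1 : Matrix (Fin k) (Fin k) ℝ)) := by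
  obtain ⟨P, Q, S, T, rfl⟩ : ∃ P Q S T, A = fromBlocks P Q S T :=
    ⟨_, _, _, _, (fromBlocks_toBlocks A).symm⟩
  have hdiag : ∀ E, IsOrthoMat E →
      E * P * Eᵀ = P ∧ E * Q * Eᵀ = Q ∧ E * S * Eᵀ = S ∧ E * T * Eᵀ = T := fun E hE => by
    simpa [fromBlocks_diag_conj] using h _ ⟨E, hE, Or.inl rfl⟩
  have hswap : T = P ∧ S = Q ∧ Q = S ∧ P = T := by
    simpa [fromBlocks_swap_conj] using h _ ⟨1, ⟨by simp, by simp⟩, Or.inr rfl⟩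
  obtain ⟨α, hα⟩ := exists_eq_smul_one_of_forall_isOrthoMat_conj P fun E hE => (hdiag E hE).1
  obtain ⟨β, hβ⟩ := exists_eq_smul_one_of_forall_isOrthoMat_conj Q fun E hE => (hdiag E hE).2.1
  exact ⟨α, β, by rw [hswap.1, hswap.2.1, hα, hβ]⟩

/-- If `F·A·Fᵀ = A` for every block-orthogonal `F`, then, in `k×k` blocks,
`A = [[α·I, β·I],[β·I, α·I]]` for some reals `α, β`. -/
theorem stmt1 (k : ℕ) (hk : 1 ≤ k) (A : Matrix (Fin k ⊕ Fin k) (Fin k ⊕ Fin k) ℝ)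
    (h : ∀ F : Matrix (Fin k ⊕ Fin k) (Fin k ⊕ Fin k) ℝ, IsBlockOrthoMat F →
      F * A * Fᵀ = A) :
    ∃ α β : ℝ, A = Matrix.fromBlocks
      (α • (1 : Matrix (Fin k) (Fin k) ℝ)) (β • (1 : Matrix (Fin k) (Fin k) ℝ))
      (β • (1 : Matrix (Fin k) (Fin k) ℝ)) (α • (1 : Matrix (Fin k) (Fin k) ℝ)) :=
  stmt1_general k A h
end

section
/- Let D = 2k be even, let M ∈ ℝ^{D×D} be the block-swap matrix [[0, I_k],[I_k, 0]], let L ≥ 1, let X₁, X₂ ∈ ℝ^{L×D}, and let α₁, α₂, α₃ ∈ ℝ. Define W ∈ ℝ^{2D×2D} in D×D blocks by W = [[α₁·I_D, 0],[0, α₂·I_D + α₃·M]]. Then for every orthogonal matrix E ∈ ℝ^{D×D} and every block-orthogonal matrix F ∈ ℝ^{D×D} (with respect to the split D = k + k), the matrix of first-layer attention scores is invariant under the data rotation: [X₁·E | X₂·F]·W·[X₁·E | X₂·F]ᵀ = [X₁ | X₂]·W·[X₁ | X₂]ᵀ, where [A | B] denotes horizontal concatenation of matrices. -/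
open Matrix

/-- The block-swap matrix `M = [[0, I_k],[I_k, 0]]` on `ℝ^D` with `D = 2k`. -/
def blockSwap (k : ℕ) : Matrix (Fin k ⊕ Fin k) (Fin k ⊕ Fin k) ℝ :=
  Matrix.fromBlocks 0 1 1 0

/-! The score matrix splits as `X₁ W₁ X₁ᵀ + X₂ W₂ X₂ᵀ`, so it suffices that each rotation
conjugates its block of `W` to itself: `α₁ • 1` is fixed by every orthogonal `E`, and a
block-orthogonal `F` is orthogonal and commutes with the block swap `M`. -/

variable {R : Type*} [CommRing R]

theorem fromCols_mul_fromBlocks_diagonal_mul_transpose {l m n : Type*} [Fintype m] [Fintype n]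
    (A : Matrix l m R) (B : Matrix l n R) (W₁ : Matrix m m R) (W₂ : Matrix n n R) :
    fromCols A B * fromBlocks W₁ 0 0 W₂ * (fromCols A B)ᵀ = A * W₁ * Aᵀ + B * W₂ * Bᵀ := by
  rw [fromCols_mul_fromBlocks, transpose_fromCols, fromCols_mul_fromRows]
  simp only [Matrix.mul_zero, add_zero, zero_add]

section Conjugation

variable {l n : Type*} [Fintype n] {U : Matrix n n R}

theorem conj_smul_one_of_mul_transpose_eq_one [DecidableEq n] (hU : U * Uᵀ = 1) (a : R) :
    U * (a • 1) * Uᵀ = a • 1 := by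
  rw [Matrix.mul_smul, Matrix.mul_one, Matrix.smul_mul, hU]

theorem mul_mul_transpose_eq_of_conj_eq {W : Matrix n n R} (hU : U * W * Uᵀ = W)
    (X : Matrix l n R) : X * U * W * (X * U)ᵀ = X * W * Xᵀ := by
  conv_rhs => rw [← hU]
  simp only [transpose_mul, Matrix.mul_assoc]

end Conjugation

namespace IsBlockOrthoMat

variable {k : ℕ} {F : Matrix (Fin k ⊕ Fin k) (Fin k ⊕ Fin k) ℝ}

theorem mul_transpose_self (hF : IsBlockOrthoMat F) : F * Fᵀ = 1 := by
  obtain ⟨E₀, ⟨hE₀, -⟩, rfl | rfl⟩ := hF <;>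
    simp [fromBlocks_transpose, fromBlocks_multiply, hE₀, fromBlocks_one]

theorem conj_blockSwap (hF : IsBlockOrthoMat F) : F * blockSwap k * Fᵀ = blockSwap k := by
  obtain ⟨E₀, ⟨hE₀, -⟩, rfl | rfl⟩ := hF <;>
    simp [blockSwap, fromBlocks_transpose, fromBlocks_multiply, hE₀]

theorem conj_smul_one_add_smul_blockSwap (hF : IsBlockOrthoMat F) (a b : ℝ) :
    F * (a • 1 + b • blockSwap k) * Fᵀ = a • 1 + b • blockSwap k := by
  rw [Matrix.mul_add, Matrix.add_mul, conj_smul_one_of_mul_transpose_eq_one hF.mul_transpose_self,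
    Matrix.mul_smul, Matrix.smul_mul, hF.conj_blockSwap]

end IsBlockOrthoMat

theorem stmt4_general (k : ℕ) (L : ℕ)
    (X₁ X₂ : Matrix (Fin L) (Fin k ⊕ Fin k) ℝ) (α₁ α₂ α₃ : ℝ)
    (E : Matrix (Fin k ⊕ Fin k) (Fin k ⊕ Fin k) ℝ) (hE : IsOrthoMat E)
    (F : Matrix (Fin k ⊕ Fin k) (Fin k ⊕ Fin k) ℝ) (hF : IsBlockOrthoMat F) :
    Matrix.fromCols (X₁ * E) (X₂ * F) *
        Matrix.fromBlocks (α₁ • (1 : Matrix (Fin k ⊕ Fin k) (Fin k ⊕ Fin k) ℝ)) 0 0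
          (α₂ • (1 : Matrix (Fin k ⊕ Fin k) (Fin k ⊕ Fin k) ℝ) + α₃ • blockSwap k) *
        (Matrix.fromCols (X₁ * E) (X₂ * F))ᵀ =
      Matrix.fromCols X₁ X₂ *
        Matrix.fromBlocks (α₁ • (1 : Matrix (Fin k ⊕ Fin k) (Fin k ⊕ Fin k) ℝ)) 0 0
          (α₂ • (1 : Matrix (Fin k ⊕ Fin k) (Fin k ⊕ Fin k) ℝ) + α₃ • blockSwap k) *
        (Matrix.fromCols X₁ X₂)ᵀ := by
  rw [fromCols_mul_fromBlocks_diagonal_mul_transpose,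
    fromCols_mul_fromBlocks_diagonal_mul_transpose,
    mul_mul_transpose_eq_of_conj_eq (conj_smul_one_of_mul_transpose_eq_one hE.1 α₁),
    mul_mul_transpose_eq_of_conj_eq (hF.conj_smul_one_add_smul_blockSwap α₂ α₃)]

/-- Invariance of the first-layer attention scores under data rotations:
with `W = [[α₁·I, 0],[0, α₂·I + α₃·M]]` in `D×D` blocks (`D = 2k`), for every orthogonal
`E` and block-orthogonal `F`, `[X₁·E | X₂·F]·W·[X₁·E | X₂·F]ᵀ = [X₁ | X₂]·W·[X₁ | X₂]ᵀ`. -/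
theorem stmt4 (k : ℕ) (hk : 1 ≤ k) (L : ℕ) (hL : 1 ≤ L)
    (X₁ X₂ : Matrix (Fin L) (Fin k ⊕ Fin k) ℝ) (α₁ α₂ α₃ : ℝ)
    (E : Matrix (Fin k ⊕ Fin k) (Fin k ⊕ Fin k) ℝ) (hE : IsOrthoMat E)
    (F : Matrix (Fin k ⊕ Fin k) (Fin k ⊕ Fin k) ℝ) (hF : IsBlockOrthoMat F) :
    Matrix.fromCols (X₁ * E) (X₂ * F) *
        Matrix.fromBlocks (α₁ • (1 : Matrix (Fin k ⊕ Fin k) (Fin k ⊕ Fin k) ℝ)) 0 0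
          (α₂ • (1 : Matrix (Fin k ⊕ Fin k) (Fin k ⊕ Fin k) ℝ) + α₃ • blockSwap k) *
        (Matrix.fromCols (X₁ * E) (X₂ * F))ᵀ =
      Matrix.fromCols X₁ X₂ *
        Matrix.fromBlocks (α₁ • (1 : Matrix (Fin k ⊕ Fin k) (Fin k ⊕ Fin k) ℝ)) 0 0
          (α₂ • (1 : Matrix (Fin k ⊕ Fin k) (Fin k ⊕ Fin k) ℝ) + α₃ • blockSwap k) *
        (Matrix.fromCols X₁ X₂)ᵀ :=
  stmt4_general k L X₁ X₂ α₁ α₂ α₃ E hE F hF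
end

section
/- There exists an integer N₀ such that for every integer N ≥ N₀ and all real numbers α, β, γ with 0 ≤ α ≤ 1/2, 0 ≤ β ≤ 1/2, and 0 ≤ γ ≤ 1/2, one has ∂L_N/∂α (α, β, γ) ≤ 0 and ∂L_N/∂β (α, β, γ) ≤ 0; that is, under gradient descent the parameters α and β are non-decreasing in this regime. -/
/-!
Writing `M = 2N − 1`, the loss is `L_N = g(s)` with
`g(t) = γ²(t² + M)/(t + M)² − 2γt/(t + M) + 1`, and
`g'(t) = 2γM(γ(t − 1) − (t + M))/(t + M)³`, which is `≤ 0` for `t ≥ 1` and `0 ≤ γ ≤ 1`.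
For `β ≥ 0` the exponent of `s` is nonnegative, so `s ≥ 1`, and `s` is nondecreasing in both
`α` and `β`; the chain rule gives the claim for every `N ≥ 1`.
-/

noncomputable section

/-- `s = exp(β·e^α / (e^α + 2N − 2))`. -/
def sFun (N : ℕ) (α β : ℝ) : ℝ :=
  Real.exp (β * Real.exp α / (Real.exp α + 2 * (N : ℝ) - 2))

/-- `r = s + 2N − 1`. -/
def rFun (N : ℕ) (α β : ℝ) : ℝ := sFun N α β + 2 * (N : ℝ) - 1

/-- The loss `L_N(α, β, γ) = γ²·(s² + 2N − 1)/r² − 2γ·s/r + 1`. -/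
def Lfun (N : ℕ) (α β γ : ℝ) : ℝ :=
  γ ^ 2 * ((sFun N α β) ^ 2 + (2 * (N : ℝ) - 1)) / (rFun N α β) ^ 2 -
    2 * γ * sFun N α β / rFun N α β + 1

/-- The partial derivative `∂L_N/∂α`. -/
def dLalpha (N : ℕ) (α β γ : ℝ) : ℝ := deriv (fun x => Lfun N x β γ) α

/-- The partial derivative `∂L_N/∂β`. -/
def dLbeta (N : ℕ) (α β γ : ℝ) : ℝ := deriv (fun x => Lfun N α x γ) β

/-- The partial derivative `∂L_N/∂γ`. -/
def dLgamma (N : ℕ) (α β γ : ℝ) : ℝ := deriv (fun x => Lfun N α β x) γ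

open Real

def lossProfile (M γ t : ℝ) : ℝ :=
  γ ^ 2 * (t ^ 2 + M) / (t + M) ^ 2 - 2 * γ * t / (t + M) + 1

lemma hasDerivAt_lossProfile (M γ t : ℝ) (h : t + M ≠ 0) :
    HasDerivAt (lossProfile M γ) (2 * γ * M * (γ * (t - 1) - (t + M)) / (t + M) ^ 3) t := by
  have hlin : HasDerivAt (fun u : ℝ => u + M) 1 t := (hasDerivAt_id t).add_const M
  have hnum : HasDerivAt (fun u : ℝ => γ ^ 2 * (u ^ 2 + M)) (γ ^ 2 * (2 * t)) t := by
    simpa using ((hasDerivAt_pow 2 t).add_const M).const_mul (γ ^ 2)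
  have hden : HasDerivAt (fun u : ℝ => (u + M) ^ 2) (2 * (t + M)) t := by
    simpa using hlin.fun_pow 2
  have hcross : HasDerivAt (fun u : ℝ => 2 * γ * u) (2 * γ) t := by
    simpa using (hasDerivAt_id t).const_mul (2 * γ)
  refine (((hnum.fun_div hden (pow_ne_zero 2 h)).fun_sub
    (hcross.fun_div hlin h)).add_const 1).congr_deriv ?_
  field_simp
  ring

lemma lossProfile_deriv_nonpos {M γ t : ℝ} (hM : 0 ≤ M) (hγ₀ : 0 ≤ γ) (hγ₁ : γ ≤ 1)
    (ht : 1 ≤ t) : 2 * γ * M * (γ * (t - 1) - (t + M)) / (t + M) ^ 3 ≤ 0 := by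
  have hγt : γ * (t - 1) ≤ t - 1 := mul_le_of_le_one_left (by linarith) hγ₁
  refine div_nonpos_of_nonpos_of_nonneg ?_ (by positivity)
  exact mul_nonpos_of_nonneg_of_nonpos (by positivity) (by linarith)

lemma deriv_lossProfile_comp_nonpos {f : ℝ → ℝ} {x d M γ : ℝ} (hf : HasDerivAt f d x)
    (hd : 0 ≤ d) (hfx : 1 ≤ f x) (hM : 0 ≤ M) (hγ₀ : 0 ≤ γ) (hγ₁ : γ ≤ 1) :
    deriv (fun y => lossProfile M γ (f y)) x ≤ 0 := by
  have hg := hasDerivAt_lossProfile M γ (f x) (by linarith)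
  exact (hg.comp x hf).deriv.trans_le <|
    mul_nonpos_of_nonpos_of_nonneg (lossProfile_deriv_nonpos hM hγ₀ hγ₁ hfx) hd

lemma Lfun_eq_lossProfile (N : ℕ) (α β γ : ℝ) :
    Lfun N α β γ = lossProfile (2 * N - 1) γ (sFun N α β) := by
  simp only [Lfun, rFun, lossProfile]
  ring

lemma one_le_sFun {N : ℕ} (hN : 1 ≤ N) (α : ℝ) {β : ℝ} (hβ : 0 ≤ β) : 1 ≤ sFun N α β := by
  have hN' : (1 : ℝ) ≤ N := by exact_mod_cast hN
  exact one_le_exp (div_nonneg (mul_nonneg hβ (exp_pos α).le) (by linarith [exp_pos α]))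

lemma hasDerivAt_sFun_left (N : ℕ) (α β : ℝ) (h : exp α + 2 * N - 2 ≠ 0) :
    HasDerivAt (fun a => sFun N a β)
      (sFun N α β * (β * exp α * (2 * N - 2) / (exp α + 2 * N - 2) ^ 2)) α := by
  have hnum : HasDerivAt (fun a => β * exp a) (β * exp α) α := (hasDerivAt_exp α).const_mul β
  have hden : HasDerivAt (fun a => exp a + 2 * (N : ℝ) - 2) (exp α) α := by
    simpa using ((hasDerivAt_exp α).add_const (2 * (N : ℝ))).sub_const 2
  have harg := (hnum.fun_div hden h).congr_deriv
    (show _ = β * exp α * (2 * N - 2) / (exp α + 2 * N - 2) ^ 2 by field_simp; ring)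
  simpa [sFun, mul_comm] using harg.exp

lemma hasDerivAt_sFun_right (N : ℕ) (α β : ℝ) :
    HasDerivAt (fun b => sFun N α b) (sFun N α β * (exp α / (exp α + 2 * N - 2))) β := by
  have harg := ((hasDerivAt_id β).mul_const (exp α)).div_const (exp α + 2 * (N : ℝ) - 2)
  simpa [sFun, mul_comm] using harg.exp

/-- For all sufficiently large `N`, in the regime `0 ≤ α, β, γ ≤ 1/2`, both
`∂L_N/∂α ≤ 0` and `∂L_N/∂β ≤ 0`: under gradient descent `α` and `β` are
non-decreasing in this regime. -/
theorem stmt12 :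
    ∃ N₀ : ℕ, ∀ N : ℕ, N₀ ≤ N → ∀ α β γ : ℝ,
      0 ≤ α → α ≤ 1 / 2 → 0 ≤ β → β ≤ 1 / 2 → 0 ≤ γ → γ ≤ 1 / 2 →
        dLalpha N α β γ ≤ 0 ∧ dLbeta N α β γ ≤ 0 := by
  refine ⟨1, fun N hN α β γ _ _ hβ _ hγ₀ hγ₁ => ?_⟩
  have hN' : (1 : ℝ) ≤ N := by exact_mod_cast hN
  have hden : 0 < exp α + 2 * N - 2 := by linarith [exp_pos α]
  have hs : 1 ≤ sFun N α β := one_le_sFun hN α hβ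
  have hsPos : 0 < sFun N α β := by linarith
  have hM : (0 : ℝ) ≤ 2 * N - 1 := by linarith
  simp only [dLalpha, dLbeta, Lfun_eq_lossProfile]
  constructor
  · have hc : (0 : ℝ) ≤ 2 * N - 2 := by linarith
    exact deriv_lossProfile_comp_nonpos (hasDerivAt_sFun_left N α β hden.ne') (by positivity)
      hs hM hγ₀ (by linarith)
  · exact deriv_lossProfile_comp_nonpos (hasDerivAt_sFun_right N α β) (by positivity)
      hs hM hγ₀ (by linarith)
end
end

section
/- There exist constants c > 0, C > 0 and an integer N₀ such that for every integer N ≥ N₀ and all real numbers α, β, γ with 0 ≤ α ≤ 1/2, 0 ≤ β ≤ 1/2, and 1/2 ≤ γ ≤ 3/2, one has c/N² ≤ −∂L_N/∂β (α, β, γ) ≤ C/N²; that is, −∂L_N/∂β = Θ(1/N²) uniformly over this regime. -/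
/-!
Write `k = e^α / (e^α + 2N − 2)`, `s = e^{βk}`, `m = 2N − 1` and `r = s + m`. Since `L_N` depends
on `β` only through `s`, the chain rule gives
`−∂L_N/∂β = k s · 2γ m (r − γ(s − 1)) / r³`.
In the given regime `k ≍ 1/N`, `s ∈ [1, 3]`, `γ ≍ 1`, and `m`, `r`, `r − γ(s − 1)` are all `≍ N`,
so `−∂L_N/∂β ≍ (1/N) · N · N / N³ = 1/N²`.
-/

noncomputable section

open Real

def lossOfS (γ m s : ℝ) : ℝ :=
  γ ^ 2 * (s ^ 2 + m) / (s + m) ^ 2 - 2 * γ * s / (s + m) + 1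

theorem Lfun_eq_lossOfS (N : ℕ) (α β γ : ℝ) :
    Lfun N α β γ = lossOfS γ (2 * N - 1) (sFun N α β) := by
  simp only [Lfun, lossOfS, rFun, add_sub_assoc]

theorem hasDerivAt_lossOfS (γ m : ℝ) {s : ℝ} (hs : s + m ≠ 0) :
    HasDerivAt (lossOfS γ m)
      (-(2 * γ * m * (s + m - γ * (s - 1)) / (s + m) ^ 3)) s := by
  have hr : HasDerivAt (fun x => x + m) 1 s := (hasDerivAt_id s).add_const m
  have hquot := (((hasDerivAt_pow 2 s).add_const m).const_mul (γ ^ 2)).div (hr.pow 2)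
    (pow_ne_zero 2 hs)
  have hfrac := ((hasDerivAt_id s).const_mul (2 * γ)).div hr hs
  refine ((hquot.sub hfrac).add_const 1).congr_deriv ?_
  simp only [Pi.pow_apply, id]
  field_simp
  ring

theorem hasDerivAt_sFun (N : ℕ) (α β : ℝ) :
    HasDerivAt (sFun N α)
      (exp α / (exp α + 2 * N - 2) * sFun N α β) β := by
  rw [show sFun N α = fun x => exp (x * (exp α / (exp α + 2 * N - 2))) from
    funext fun x => by rw [sFun, mul_div_assoc]]
  have h := ((hasDerivAt_id' β).mul_const (exp α / (exp α + 2 * N - 2))).exp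
  rw [one_mul] at h
  exact h.congr_deriv (mul_comm _ _)

theorem neg_dLbeta_eq (N : ℕ) (hN : 1 ≤ N) (α β γ : ℝ) :
    -dLbeta N α β γ = exp α / (exp α + 2 * N - 2) * sFun N α β *
      (2 * γ * (2 * N - 1) * (sFun N α β + (2 * N - 1) - γ * (sFun N α β - 1)) /
        (sFun N α β + (2 * N - 1)) ^ 3) := by
  have hN' : (1 : ℝ) ≤ N := by exact_mod_cast hN
  have hr : sFun N α β + (2 * N - 1) ≠ 0 := by
    unfold sFun; linarith [exp_pos (β * exp α / (exp α + 2 * N - 2))]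
  have h := (hasDerivAt_lossOfS γ (2 * N - 1) hr).comp β (hasDerivAt_sFun N α β)
  rw [dLbeta, funext (Lfun_eq_lossOfS N α · γ), ← Function.comp_def, h.deriv]
  ring

theorem one_le_exp_le_three {x : ℝ} (h₀ : 0 ≤ x) (h₁ : x ≤ 1) : 1 ≤ exp x ∧ exp x ≤ 3 :=
  ⟨one_le_exp h₀, (exp_le_exp.mpr h₁).trans exp_one_lt_d9.le |>.trans (by norm_num)⟩

theorem exp_div_exp_add_bounds {α n : ℝ} (h₀ : 0 ≤ α) (h₁ : α ≤ 1) (hn : 1 ≤ n) :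
    1 / (3 * n) ≤ exp α / (exp α + 2 * n - 2) ∧ exp α / (exp α + 2 * n - 2) ≤ 3 / n := by
  obtain ⟨he₁, he₃⟩ := one_le_exp_le_three h₀ h₁
  constructor <;> rw [div_le_div_iff₀ (by linarith) (by linarith)] <;> nlinarith

theorem neg_loss_slope_bounds {n k s γ : ℝ} (hn : 2 ≤ n)
    (hk₁ : 1 / (3 * n) ≤ k) (hk₂ : k ≤ 3 / n) (hs₁ : 1 ≤ s) (hs₂ : s ≤ 3)
    (hγ₁ : 1 / 2 ≤ γ) (hγ₂ : γ ≤ 3 / 2) :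
    1 / 81 / n ^ 2 ≤ k * s * (2 * γ * (2 * n - 1) * (s + (2 * n - 1) - γ * (s - 1)) /
        (s + (2 * n - 1)) ^ 3) ∧
      k * s * (2 * γ * (2 * n - 1) * (s + (2 * n - 1) - γ * (s - 1)) /
        (s + (2 * n - 1)) ^ 3) ≤ 162 / n ^ 2 := by
  set r := s + (2 * n - 1)
  have hk : 0 < k := lt_of_lt_of_le (by positivity) hk₁
  have hγ : 0 < γ := by linarith
  have hm : 0 < 2 * n - 1 := by linarith
  have hr₁ : n ≤ r := by linarith
  have hr₂ : r ≤ 3 * n := by linarith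
  have hgap₁ : n ≤ r - γ * (s - 1) := by nlinarith
  have hgap₂ : r - γ * (s - 1) ≤ 3 * n := by nlinarith
  have hgap : 0 < r - γ * (s - 1) := by linarith
  have hnum₁ : n / 3 ≤ k * s * (2 * γ * (2 * n - 1) * (r - γ * (s - 1))) :=
    calc n / 3 = 1 / (3 * n) * 1 * (2 * (1 / 2) * n * n) := by field_simp
      _ ≤ _ := by gcongr; linarith
  have hnum₂ : k * s * (2 * γ * (2 * n - 1) * (r - γ * (s - 1))) ≤ 162 * n :=
    calc _ ≤ 3 / n * 3 * (2 * (3 / 2) * (2 * n) * (3 * n)) := by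
          gcongr; linarith
      _ = 162 * n := by field_simp; ring
  rw [mul_div_assoc']
  constructor
  · calc 1 / 81 / n ^ 2 = (n / 3) / (3 * n) ^ 3 := by field_simp; ring
      _ ≤ _ := div_le_div₀ (by linarith) hnum₁ (pow_pos (by linarith) 3) (by gcongr)
  · calc _ ≤ 162 * n / n ^ 3 :=
          div_le_div₀ (by positivity) hnum₂ (by positivity) (by gcongr)
      _ = 162 / n ^ 2 := by field_simp

/-- For all sufficiently large `N`, in the regime `0 ≤ α ≤ 1/2`, `0 ≤ β ≤ 1/2`,
`1/2 ≤ γ ≤ 3/2`, one has `c/N² ≤ −∂L_N/∂β ≤ C/N²`; that is, `−∂L_N/∂β = Θ(1/N²)`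
uniformly over this regime. -/
theorem stmt16 :
    ∃ c C : ℝ, 0 < c ∧ 0 < C ∧ ∃ N₀ : ℕ, ∀ N : ℕ, N₀ ≤ N → ∀ α β γ : ℝ,
      0 ≤ α → α ≤ 1 / 2 → 0 ≤ β → β ≤ 1 / 2 → 1 / 2 ≤ γ → γ ≤ 3 / 2 →
        c / (N : ℝ) ^ 2 ≤ -dLbeta N α β γ ∧ -dLbeta N α β γ ≤ C / (N : ℝ) ^ 2 := by
  refine ⟨1 / 81, 162, by norm_num, by norm_num, 2, fun N hN α β γ hα₀ hα₁ hβ₀ hβ₁ hγ₁ hγ₂ => ?_⟩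
  have hn : (2 : ℝ) ≤ N := by exact_mod_cast hN
  obtain ⟨hk₁, hk₂⟩ := exp_div_exp_add_bounds hα₀ (by linarith) (by linarith : (1 : ℝ) ≤ N)
  have hk₀ : 0 ≤ exp α / (exp α + 2 * N - 2) := hk₁.trans' (by positivity)
  have hβk : β * (exp α / (exp α + 2 * N - 2)) ≤ 1 :=
    calc _ ≤ 1 / 2 * (3 / 2) :=
          mul_le_mul hβ₁ (hk₂.trans (by gcongr)) hk₀ (by norm_num)
      _ ≤ 1 := by norm_num
  obtain ⟨hs₁, hs₂⟩ := one_le_exp_le_three (mul_nonneg hβ₀ hk₀) hβk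
  rw [← mul_div_assoc] at hs₁ hs₂
  rw [neg_dLbeta_eq N (by omega)]
  exact neg_loss_slope_bounds hn hk₁ hk₂ hs₁ hs₂ hγ₁ hγ₂
end
end

section
/- There exist constants c > 0, C > 0 and an integer N₀ such that for every integer N ≥ N₀ and every gradient-flow solution (α, β, γ) of L_N with zero initialization, the emergence times T_α, T_β, T_γ are all finite, they satisfy the strict ordering T_γ < T_β < T_α, and they obey the bounds c·N ≤ T_γ ≤ C·N, c·N² ≤ T_β ≤ C·N², and c·N² ≤ T_α ≤ C·N². In particular T_γ = Θ(N) and T_β = T_α = Θ(N²). -/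
noncomputable section

/-- The emergence time of a parameter trajectory `f`: the first time `t ≥ 0` with
`f t ≥ 1/2` (as an infimum). -/
def emergeTime (f : ℝ → ℝ) : ℝ := sInf {t : ℝ | 0 ≤ t ∧ 1 / 2 ≤ f t}

namespace GF

open Real Set Filter Topology

lemma hasDerivAt_Lgamma (N : ℕ) (α β γ : ℝ) :
    HasDerivAt (fun x => Lfun N α β x)
      (2 * γ * ((sFun N α β) ^ 2 + (2 * (N : ℝ) - 1)) / (rFun N α β) ^ 2
        - 2 * sFun N α β / rFun N α β) γ := by
  have h := ((((hasDerivAt_pow 2 γ).mul_const ((sFun N α β) ^ 2 + (2 * (N : ℝ) - 1))).div_const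
      ((rFun N α β) ^ 2)).sub
      ((((hasDerivAt_id' (x := γ)).const_mul 2).mul_const (sFun N α β)).div_const
        (rFun N α β))).add_const 1
  refine h.congr_deriv ?_
  ring

lemma outer {S : ℝ → ℝ} {x d c : ℝ} (γ : ℝ) (hS : HasDerivAt S d x) (hr : S x + c - 1 ≠ 0) :
    HasDerivAt (fun y => γ ^ 2 * ((S y) ^ 2 + (c - 1)) / (S y + c - 1) ^ 2
        - 2 * γ * S y / (S y + c - 1) + 1)
      (2 * (c - 1) * γ * (γ * (S x - 1) - (S x + c - 1)) / (S x + c - 1) ^ 3 * d) x := by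
  have h1 := ((hS.pow 2).add_const (c - 1)).const_mul (γ ^ 2)
  have h2 := ((hS.add_const c).sub_const 1).pow 2
  have h3 := h1.div h2 (pow_ne_zero 2 hr)
  have h4 := hS.const_mul (2 * γ)
  have h5 := h4.div ((hS.add_const c).sub_const 1) hr
  have h6 := (h3.sub h5).add_const 1
  refine h6.congr_deriv ?_
  simp only [Pi.pow_apply]
  field_simp
  ring

lemma hasDerivAt_sFun_beta (N : ℕ) (α β : ℝ) :
    HasDerivAt (fun x => sFun N α x)
      (sFun N α β * (Real.exp α / (Real.exp α + 2 * (N : ℝ) - 2))) β := by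
  have h : HasDerivAt (fun x : ℝ => x * Real.exp α / (Real.exp α + 2 * (N : ℝ) - 2))
      (Real.exp α / (Real.exp α + 2 * (N : ℝ) - 2)) β := by
    simpa using ((hasDerivAt_id' (x := β)).mul_const (Real.exp α)).div_const
      (Real.exp α + 2 * (N : ℝ) - 2)
  simpa [sFun] using h.exp

lemma hasDerivAt_sFun_alpha (N : ℕ) (α β : ℝ) (hG : Real.exp α + 2 * (N : ℝ) - 2 ≠ 0) :
    HasDerivAt (fun x => sFun N x β)
      (sFun N α β * (β * Real.exp α * (2 * (N : ℝ) - 2) / (Real.exp α + 2 * (N : ℝ) - 2) ^ 2))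
      α := by
  have hnum : HasDerivAt (fun x : ℝ => β * Real.exp x) (β * Real.exp α) α :=
    (Real.hasDerivAt_exp α).const_mul β
  have hden : HasDerivAt (fun x : ℝ => Real.exp x + 2 * (N : ℝ) - 2) (Real.exp α) α := by
    simpa using ((Real.hasDerivAt_exp α).add_const (2 * (N : ℝ))).sub_const 2
  have h := (hnum.div hden hG).exp
  have : (fun x => sFun N x β) = fun x =>
      Real.exp (β * Real.exp x / (Real.exp x + 2 * (N : ℝ) - 2)) := by
    funext x; simp [sFun]
  rw [this]
  simp only [sFun]
  refine h.congr_deriv ?_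
  simp only [Pi.div_apply]
  ring

lemma hasDerivAt_Lbeta (N : ℕ) (α β γ : ℝ) (hr : rFun N α β ≠ 0) :
    HasDerivAt (fun x => Lfun N α x γ)
      (2 * (2 * (N : ℝ) - 1) * γ * (γ * (sFun N α β - 1) - rFun N α β) / (rFun N α β) ^ 3
        * (sFun N α β * (Real.exp α / (Real.exp α + 2 * (N : ℝ) - 2)))) β := by
  have hr' : sFun N α β + 2 * (N : ℝ) - 1 ≠ 0 := hr
  have h := outer (S := fun x => sFun N α x) (c := 2 * (N : ℝ)) γ
    (hasDerivAt_sFun_beta N α β) hr'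
  simpa [Lfun, rFun] using h

lemma hasDerivAt_Lalpha (N : ℕ) (α β γ : ℝ) (hr : rFun N α β ≠ 0)
    (hG : Real.exp α + 2 * (N : ℝ) - 2 ≠ 0) :
    HasDerivAt (fun x => Lfun N x β γ)
      (2 * (2 * (N : ℝ) - 1) * γ * (γ * (sFun N α β - 1) - rFun N α β) / (rFun N α β) ^ 3
        * (sFun N α β *
          (β * Real.exp α * (2 * (N : ℝ) - 2) / (Real.exp α + 2 * (N : ℝ) - 2) ^ 2))) α := by
  have hr' : sFun N α β + 2 * (N : ℝ) - 1 ≠ 0 := hr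
  have h := outer (S := fun x => sFun N x β) (c := 2 * (N : ℝ)) γ
    (hasDerivAt_sFun_alpha N α β hG) hr'
  simpa [Lfun, rFun] using h


/-! ### Force formulas -/

lemma neg_dgamma_eq (N : ℕ) (α β γ : ℝ) :
    -dLgamma N α β γ = 2 * sFun N α β / rFun N α β
      - 2 * γ * ((sFun N α β) ^ 2 + (2 * (N : ℝ) - 1)) / (rFun N α β) ^ 2 := by
  rw [dLgamma, (hasDerivAt_Lgamma N α β γ).deriv]; ring

lemma neg_dbeta_eq (N : ℕ) (α β γ : ℝ) (hr : rFun N α β ≠ 0) :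
    -dLbeta N α β γ = 2 * (2 * (N : ℝ) - 1) * γ * (rFun N α β - γ * (sFun N α β - 1))
        / (rFun N α β) ^ 3 * (sFun N α β * (Real.exp α / (Real.exp α + 2 * (N : ℝ) - 2))) := by
  rw [dLbeta, (hasDerivAt_Lbeta N α β γ hr).deriv]; ring

lemma neg_dalpha_eq (N : ℕ) (α β γ : ℝ) (hr : rFun N α β ≠ 0)
    (hG : Real.exp α + 2 * (N : ℝ) - 2 ≠ 0) :
    -dLalpha N α β γ = 2 * (2 * (N : ℝ) - 1) * γ * (rFun N α β - γ * (sFun N α β - 1))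
        / (rFun N α β) ^ 3 *
        (sFun N α β * (β * Real.exp α * (2 * (N : ℝ) - 2) / (Real.exp α + 2 * (N : ℝ) - 2) ^ 2)) := by
  rw [dLalpha, (hasDerivAt_Lalpha N α β γ hr hG).deriv]; ring

/-! ### Basic bounds -/

lemma N_pos {N : ℕ} (hN : (10000:ℝ) ≤ (N:ℝ)) : (0:ℝ) < (N:ℝ) := by linarith

lemma G_pos {N : ℕ} (hN : (10000:ℝ) ≤ (N:ℝ)) (α : ℝ) :
    0 < Real.exp α + 2 * (N : ℝ) - 2 := by
  nlinarith [Real.exp_pos α]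

lemma s_pos (N : ℕ) (α β : ℝ) : 0 < sFun N α β := Real.exp_pos _

lemma r_pos {N : ℕ} (hN : (10000:ℝ) ≤ (N:ℝ)) (α β : ℝ) : 0 < rFun N α β := by
  have := s_pos N α β; rw [rFun]; nlinarith

lemma exp32 : Real.exp (3/2 : ℝ) ≤ 4.5 := by
  have h1 : Real.exp (3/2 : ℝ) * Real.exp (3/2 : ℝ) = Real.exp 1 * Real.exp 1 * Real.exp 1 := by
    rw [← Real.exp_add, ← Real.exp_add, ← Real.exp_add]; norm_num
  nlinarith [Real.exp_one_lt_d9, Real.exp_pos 1, Real.exp_pos (3/2 : ℝ)]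

lemma E_bounds {α : ℝ} (hα0 : 0 ≤ α) (hα : α ≤ 3/2) :
    1 ≤ Real.exp α ∧ Real.exp α ≤ 4.5 :=
  ⟨Real.one_le_exp hα0, le_trans (Real.exp_le_exp.2 hα) exp32⟩

lemma s_le_crude {N : ℕ} (hN : (10000:ℝ) ≤ (N:ℝ)) {α β : ℝ} (hβ : β ≤ 3/2) :
    sFun N α β ≤ 4.5 := by
  have hG := G_pos hN α
  have hE := Real.exp_pos α
  have hu : β * Real.exp α / (Real.exp α + 2 * (N : ℝ) - 2) ≤ 3/2 := by
    rw [div_le_iff₀ hG]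
    rcases le_or_gt β 0 with hb | hb
    · nlinarith
    · nlinarith
  calc sFun N α β ≤ Real.exp (3/2 : ℝ) := Real.exp_le_exp.2 hu
    _ ≤ 4.5 := exp32

lemma s_bounds {N : ℕ} (hN : (10000:ℝ) ≤ (N:ℝ)) {α β : ℝ} (hα0 : 0 ≤ α) (hα : α ≤ 3/2)
    (hβ0 : 0 ≤ β) (hβ : β ≤ 3/2) :
    1 ≤ sFun N α β ∧ sFun N α β ≤ 1 + 12 / (N : ℝ) := by
  have hG := G_pos hN α
  have hE := E_bounds hα0 hα
  set u := β * Real.exp α / (Real.exp α + 2 * (N : ℝ) - 2) with hu_def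
  have hu0 : 0 ≤ u := div_nonneg (mul_nonneg hβ0 (Real.exp_pos α).le) hG.le
  have hu : u ≤ 4 / (N : ℝ) := by
    rw [hu_def, div_le_div_iff₀ hG (N_pos hN)]
    have hbe : β * Real.exp α ≤ 6.75 := by
      nlinarith [mul_le_mul hβ hE.2 (Real.exp_pos α).le (by norm_num : (0:ℝ) ≤ 3/2)]
    nlinarith [mul_le_mul_of_nonneg_right hbe (N_pos hN).le, hE.1]
  have hu2 : u ≤ 1/2 := by
    have : (4:ℝ) / (N:ℝ) ≤ 1/2 := by rw [div_le_iff₀ (N_pos hN)]; linarith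
    linarith
  constructor
  · exact Real.one_le_exp hu0
  · have h1 : 1 - u ≤ Real.exp (-u) := by have := Real.add_one_le_exp (-u); linarith
    have h2 : Real.exp u ≤ 1 / (1 - u) := by
      rw [show Real.exp u = (Real.exp (-u))⁻¹ by rw [Real.exp_neg, inv_inv]]
      rw [inv_eq_one_div]
      exact one_div_le_one_div_of_le (by linarith) h1
    have h3 : 1 / (1 - u) ≤ 1 + 2 * u := by
      rw [div_le_iff₀ (by linarith : (0:ℝ) < 1 - u)]
      nlinarith
    have h5 : (2:ℝ) * u ≤ 8 / (N:ℝ) := by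
      have h8 : (2:ℝ) * (4 / (N:ℝ)) = 8 / (N:ℝ) := by ring
      linarith
    have h6 : (8:ℝ) / (N:ℝ) ≤ 12 / (N:ℝ) := by
      have h9 : (12:ℝ)/(N:ℝ) - 8/(N:ℝ) = 4/(N:ℝ) := by ring
      have h10 : (0:ℝ) ≤ 4/(N:ℝ) := by positivity
      linarith
    calc sFun N α β = Real.exp u := rfl
      _ ≤ 1 + 2 * u := le_trans h2 h3
      _ ≤ 1 + 12 / (N:ℝ) := by linarith

/-! ### Numeric helpers -/

lemma twelveN {N : ℕ} (hN : (10000:ℝ) ≤ (N:ℝ)) : 12 / (N:ℝ) ≤ 0.0012 := by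
  rw [div_le_iff₀ (N_pos hN)]; linarith

lemma s_le_num {N : ℕ} (hN : (10000:ℝ) ≤ (N:ℝ)) {α β : ℝ} (hα0 : 0 ≤ α) (hα : α ≤ 3/2)
    (hβ0 : 0 ≤ β) (hβ : β ≤ 3/2) : sFun N α β ≤ 1.01 := by
  have := (s_bounds hN hα0 hα hβ0 hβ).2
  have := twelveN hN
  linarith

/-! ### Gamma force bounds -/

lemma force_gamma_le {N : ℕ} (hN : (10000:ℝ) ≤ (N:ℝ)) {α β γ : ℝ} (hα0 : 0 ≤ α)
    (hα : α ≤ 3/2) (hβ0 : 0 ≤ β) (hβ : β ≤ 3/2) (hγ0 : 0 ≤ γ) :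
    -dLgamma N α β γ ≤ 2 / (N:ℝ) := by
  rw [neg_dgamma_eq]
  have hs1 := (s_bounds hN hα0 hα hβ0 hβ).1
  have hs2 := s_le_num hN hα0 hα hβ0 hβ
  have hrpos := r_pos hN α β
  have hRe : rFun N α β = sFun N α β + 2 * (N:ℝ) - 1 := rfl
  have hX : 0 ≤ 2 * γ * ((sFun N α β) ^ 2 + (2 * (N : ℝ) - 1)) / (rFun N α β) ^ 2 := by
    apply div_nonneg _ (by positivity)
    have : 0 ≤ (sFun N α β) ^ 2 + (2 * (N : ℝ) - 1) := by nlinarith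
    nlinarith
  have h2s : 2 * sFun N α β / rFun N α β ≤ 2 / (N:ℝ) := by
    rw [div_le_div_iff₀ hrpos (N_pos hN)]
    nlinarith
  linarith

lemma force_gamma_ge {N : ℕ} (hN : (10000:ℝ) ≤ (N:ℝ)) {α β γ : ℝ} (hα0 : 0 ≤ α)
    (hα : α ≤ 3/2) (hβ0 : 0 ≤ β) (hβ : β ≤ 3/2) (hγ0 : 0 ≤ γ) (hγ : γ ≤ 1/2) :
    1 / (3 * (N:ℝ)) ≤ -dLgamma N α β γ := by
  rw [neg_dgamma_eq]
  have hs1 := (s_bounds hN hα0 hα hβ0 hβ).1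
  have hs2 := s_le_num hN hα0 hα hβ0 hβ
  have hrpos := r_pos hN α β
  have hRe : rFun N α β = sFun N α β + 2 * (N:ℝ) - 1 := rfl
  set S := sFun N α β with hS_def
  set R := rFun N α β with hR_def
  have key : 2 * S / R - 2 * γ * (S ^ 2 + (2 * (N : ℝ) - 1)) / R ^ 2
      = (2 * S * R - 2 * γ * (S ^ 2 + (2 * (N : ℝ) - 1))) / R ^ 2 := by
    field_simp
  rw [key, div_le_div_iff₀ (by positivity) (pow_pos hrpos 2)]
  have hK : 0 ≤ (1/2 - γ) * (S ^ 2 + (2 * (N : ℝ) - 1)) := by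
    apply mul_nonneg (by linarith); nlinarith
  have h1 : 2 * (N:ℝ) ≤ 2 * S * R - (S ^ 2 + (2 * (N:ℝ) - 1)) := by
    nlinarith [mul_nonneg (by linarith : (0:ℝ) ≤ S - 1) (by nlinarith : (0:ℝ) ≤ S - 1 + 4 * (N:ℝ))]
  have h2 : R ^ 2 ≤ 6 * (N:ℝ) * (N:ℝ) := by nlinarith [N_pos hN]
  have h3 : (2 * S * R - (S ^ 2 + (2 * (N:ℝ) - 1))) * (3 * (N:ℝ))
      ≤ (2 * S * R - 2 * γ * (S ^ 2 + (2 * (N:ℝ) - 1))) * (3 * (N:ℝ)) := by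
    apply mul_le_mul_of_nonneg_right (by linarith) (by positivity)
  have h4 : 2 * (N:ℝ) * (3 * (N:ℝ)) ≤ (2 * S * R - (S ^ 2 + (2 * (N:ℝ) - 1))) * (3 * (N:ℝ)) :=
    mul_le_mul_of_nonneg_right h1 (by positivity)
  nlinarith

lemma force_gamma_at2 {N : ℕ} (hN : (10000:ℝ) ≤ (N:ℝ)) {α β : ℝ} (hα0 : 0 ≤ α)
    (hα : α ≤ 3/2) (hβ0 : 0 ≤ β) (hβ : β ≤ 3/2) :
    -dLgamma N α β 2 < 0 := by
  rw [neg_dgamma_eq]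
  have hs1 := (s_bounds hN hα0 hα hβ0 hβ).1
  have hs2 := s_le_num hN hα0 hα hβ0 hβ
  have hrpos := r_pos hN α β
  have hRe : rFun N α β = sFun N α β + 2 * (N:ℝ) - 1 := rfl
  set S := sFun N α β
  set R := rFun N α β
  have key : 2 * S / R - 2 * 2 * (S ^ 2 + (2 * (N : ℝ) - 1)) / R ^ 2
      = (2 * S * R - 4 * (S ^ 2 + (2 * (N : ℝ) - 1))) / R ^ 2 := by
    field_simp; ring
  rw [key]
  apply div_neg_of_neg_of_pos _ (pow_pos hrpos 2)
  nlinarith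

lemma force_gamma_at0 {N : ℕ} (hN : (10000:ℝ) ≤ (N:ℝ)) (α β : ℝ) :
    0 < -dLgamma N α β 0 := by
  rw [neg_dgamma_eq]
  have := s_pos N α β
  have := r_pos hN α β
  have h : 2 * (0:ℝ) * ((sFun N α β) ^ 2 + (2 * (N : ℝ) - 1)) / (rFun N α β) ^ 2 = 0 := by ring
  rw [h, sub_zero]
  exact div_pos (by linarith [s_pos N α β]) (r_pos hN α β)

lemma force_gamma_athalf {N : ℕ} (hN : (10000:ℝ) ≤ (N:ℝ)) {α β : ℝ} (hα0 : 0 ≤ α)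
    (hα : α ≤ 3/2) (hβ0 : 0 ≤ β) (hβ : β ≤ 3/2) :
    0 < -dLgamma N α β (1/2) := by
  rw [neg_dgamma_eq]
  have hs1 := (s_bounds hN hα0 hα hβ0 hβ).1
  have hs2 := s_le_num hN hα0 hα hβ0 hβ
  have hrpos := r_pos hN α β
  have hRe : rFun N α β = sFun N α β + 2 * (N:ℝ) - 1 := rfl
  set S := sFun N α β
  set R := rFun N α β
  have key : 2 * S / R - 2 * (1/2) * (S ^ 2 + (2 * (N : ℝ) - 1)) / R ^ 2
      = (2 * S * R - (S ^ 2 + (2 * (N : ℝ) - 1))) / R ^ 2 := by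
    field_simp
  rw [key]
  apply div_pos _ (pow_pos hrpos 2)
  nlinarith

/-! ### Beta force bounds -/

lemma force_beta_nonneg {N : ℕ} (hN : (10000:ℝ) ≤ (N:ℝ)) {α β γ : ℝ} (hβ : β ≤ 3/2)
    (hγ0 : 0 ≤ γ) (hγ2 : γ ≤ 2) : 0 ≤ -dLbeta N α β γ := by
  have hrpos := r_pos hN α β
  rw [neg_dbeta_eq N α β γ (ne_of_gt hrpos)]
  have hspos := s_pos N α β
  have hscrude := s_le_crude hN (α := α) hβ
  have hRe : rFun N α β = sFun N α β + 2 * (N:ℝ) - 1 := rfl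
  have hsub : 0 ≤ rFun N α β - γ * (sFun N α β - 1) := by
    rcases le_or_gt (sFun N α β) 1 with h | h
    · have : γ * (sFun N α β - 1) ≤ 0 := mul_nonpos_of_nonneg_of_nonpos hγ0 (by linarith)
      linarith
    · have h1 : γ * (sFun N α β - 1) ≤ 2 * (sFun N α β - 1) :=
        mul_le_mul_of_nonneg_right hγ2 (by linarith)
      nlinarith
  apply mul_nonneg
  · apply div_nonneg _ (by positivity)
    apply mul_nonneg (mul_nonneg (by nlinarith) hγ0) hsub
  · exact mul_nonneg hspos.le (div_nonneg (Real.exp_pos α).le (G_pos hN α).le)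

lemma force_beta_le {N : ℕ} (hN : (10000:ℝ) ≤ (N:ℝ)) {α β γ : ℝ} (hα0 : 0 ≤ α)
    (hα : α ≤ 3/2) (hβ0 : 0 ≤ β) (hβ : β ≤ 3/2) (hγ0 : 0 ≤ γ) (hγ2 : γ ≤ 2) :
    -dLbeta N α β γ ≤ 5 / (N:ℝ) ^ 2 := by
  have hrpos := r_pos hN α β
  rw [neg_dbeta_eq N α β γ (ne_of_gt hrpos)]
  have hNpos := N_pos hN
  have hGpos := G_pos hN α
  have hE := E_bounds hα0 hα
  have hs1 := (s_bounds hN hα0 hα hβ0 hβ).1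
  have hs2 := s_le_num hN hα0 hα hβ0 hβ
  have hRe : rFun N α β = sFun N α β + 2 * (N:ℝ) - 1 := rfl
  set S := sFun N α β
  set R := rFun N α β
  set E := Real.exp α
  have hsub0 : 0 ≤ R - γ * (S - 1) := by
    have h1 : γ * (S - 1) ≤ 2 * (S - 1) := mul_le_mul_of_nonneg_right hγ2 (by linarith)
    nlinarith
  have hsub1 : R - γ * (S - 1) ≤ R := by nlinarith [mul_nonneg hγ0 (by linarith : (0:ℝ) ≤ S - 1)]
  have hT1 : 2 * (2 * (N:ℝ) - 1) * γ * (R - γ * (S - 1)) / R ^ 3 ≤ 2 / (N:ℝ) := by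
    rw [div_le_div_iff₀ (pow_pos hrpos 3) hNpos]
    have hb1 : 2 * (2 * (N:ℝ) - 1) * γ * (R - γ * (S - 1)) ≤ 8 * (N:ℝ) * R := by
      have i1 : γ * (R - γ * (S - 1)) ≤ 2 * R := mul_le_mul hγ2 hsub1 hsub0 (by norm_num)
      have i2 : 2 * (2 * (N:ℝ) - 1) * (γ * (R - γ * (S - 1))) ≤ (4 * (N:ℝ)) * (2 * R) := by
        apply mul_le_mul (by linarith) i1 (mul_nonneg hγ0 hsub0) (by positivity)
      nlinarith
    have hb2 : 8 * (N:ℝ) * R * (N:ℝ) ≤ 2 * R ^ 3 := by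
      have hR2N : 2 * (N:ℝ) ≤ R := by nlinarith
      nlinarith [mul_pos hNpos hNpos, mul_le_mul hR2N hR2N (by positivity) hrpos.le]
    nlinarith [mul_le_mul_of_nonneg_right hb1 hNpos.le]
  have hT2 : S * (E / (E + 2 * (N:ℝ) - 2)) ≤ 2.4 / (N:ℝ) := by
    rw [mul_div_assoc'] at *
    rw [div_le_div_iff₀ hGpos hNpos]
    nlinarith [mul_le_mul hs2 hE.2 (Real.exp_pos α).le (by norm_num : (0:ℝ) ≤ 1.01)]
  have hT1nn : 0 ≤ 2 * (2 * (N:ℝ) - 1) * γ * (R - γ * (S - 1)) / R ^ 3 := by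
    apply div_nonneg _ (by positivity)
    exact mul_nonneg (mul_nonneg (by nlinarith) hγ0) hsub0
  have hT2nn : 0 ≤ S * (E / (E + 2 * (N:ℝ) - 2)) := by
    exact mul_nonneg (by nlinarith) (div_nonneg (Real.exp_pos α).le hGpos.le)
  calc 2 * (2 * (N:ℝ) - 1) * γ * (R - γ * (S - 1)) / R ^ 3 * (S * (E / (E + 2 * (N:ℝ) - 2)))
      ≤ (2 / (N:ℝ)) * (2.4 / (N:ℝ)) := mul_le_mul hT1 hT2 hT2nn (by positivity)
    _ = 4.8 / (N:ℝ) ^ 2 := by ring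
    _ ≤ 5 / (N:ℝ) ^ 2 := by gcongr <;> norm_num

set_option maxHeartbeats 1000000 in
lemma force_beta_ge {N : ℕ} (hN : (10000:ℝ) ≤ (N:ℝ)) {α β γ : ℝ} (hα0 : 0 ≤ α)
    (hα : α ≤ 3/2) (hβ0 : 0 ≤ β) (hβ : β ≤ 3/2) (hγ1 : 1/2 ≤ γ) (hγ2 : γ ≤ 2) :
    1 / (6 * (N:ℝ) ^ 2) ≤ -dLbeta N α β γ := by
  have hrpos := r_pos hN α β
  rw [neg_dbeta_eq N α β γ (ne_of_gt hrpos)]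
  have hNpos := N_pos hN
  have hGpos := G_pos hN α
  have hE := E_bounds hα0 hα
  have hs1 := (s_bounds hN hα0 hα hβ0 hβ).1
  have hs12 := (s_bounds hN hα0 hα hβ0 hβ).2
  have hs2 := s_le_num hN hα0 hα hβ0 hβ
  have h12N := twelveN hN
  have hRe : rFun N α β = sFun N α β + 2 * (N:ℝ) - 1 := rfl
  set S := sFun N α β
  set R := rFun N α β
  set E := Real.exp α
  have hγ0 : (0:ℝ) ≤ γ := by linarith
  have hsm : γ * (S - 1) ≤ 1 := by
    have : γ * (S - 1) ≤ 2 * (S - 1) := mul_le_mul_of_nonneg_right hγ2 (by linarith)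
    nlinarith
  have hT1 : 0.45 / (N:ℝ) ≤ 2 * (2 * (N:ℝ) - 1) * γ * (R - γ * (S - 1)) / R ^ 3 := by
    rw [div_le_div_iff₀ hNpos (pow_pos hrpos 3)]
    have hnum : (2 * (N:ℝ) - 1) * (R - 1) ≤ 2 * (2 * (N:ℝ) - 1) * γ * (R - γ * (S - 1)) := by
      have i0 : R - 1 ≤ R - γ * (S - 1) := by linarith
      have i1 : (0:ℝ) ≤ R - 1 := by nlinarith
      have i2 : (2 * (N:ℝ) - 1) * (R - 1) ≤ (2 * (2 * (N:ℝ) - 1) * γ) * (R - γ * (S - 1)) := by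
        apply mul_le_mul _ i0 i1 _
        · nlinarith
        · nlinarith [mul_le_mul_of_nonneg_right hγ2 (by linarith : (0:ℝ) ≤ 2 * (N:ℝ) - 1)]
      linarith [i2]
    have hcube : 0.45 * R ^ 3 ≤ (2 * (N:ℝ) - 1) * (R - 1) * (N:ℝ) := by
      have hRub : R ≤ 2 * (N:ℝ) + 1 := by nlinarith
      have hRlb : 2 * (N:ℝ) ≤ R := by nlinarith
      have hstep1 : R ^ 3 ≤ (2 * (N:ℝ) + 1) ^ 3 := pow_le_pow_left₀ hrpos.le hRub 3
      have hstep2 : (2 * (N:ℝ) - 1) * (2 * (N:ℝ) - 1) * (N:ℝ)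
          ≤ (2 * (N:ℝ) - 1) * (R - 1) * (N:ℝ) := by
        apply mul_le_mul_of_nonneg_right
          (mul_le_mul_of_nonneg_left (by linarith) (by linarith)) hNpos.le
      have hstep3 : 0.45 * (2 * (N:ℝ) + 1) ^ 3 ≤ (2 * (N:ℝ) - 1) * (2 * (N:ℝ) - 1) * (N:ℝ) := by
        nlinarith [mul_nonneg (mul_nonneg (by linarith : (0:ℝ) ≤ (N:ℝ) - 10000) hNpos.le) hNpos.le]
      linarith
    linarith [mul_le_mul_of_nonneg_right hnum hNpos.le]
  have hT2 : 0.45 / (N:ℝ) ≤ S * (E / (E + 2 * (N:ℝ) - 2)) := by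
    rw [mul_div_assoc']
    rw [div_le_div_iff₀ hNpos hGpos]
    nlinarith [mul_le_mul hs1 hE.1 (by norm_num : (0:ℝ) ≤ 1) (by linarith : (0:ℝ) ≤ S)]
  calc 1 / (6 * (N:ℝ) ^ 2) ≤ (0.45 / (N:ℝ)) * (0.45 / (N:ℝ)) := by
        have heq : (0.45 / (N:ℝ)) * (0.45 / (N:ℝ)) = 0.2025 / (N:ℝ) ^ 2 := by ring
        rw [heq, div_le_div_iff₀ (by positivity) (by positivity)]
        nlinarith [mul_pos hNpos hNpos]
    _ ≤ 2 * (2 * (N:ℝ) - 1) * γ * (R - γ * (S - 1)) / R ^ 3 * (S * (E / (E + 2 * (N:ℝ) - 2))) := by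
        apply mul_le_mul hT1 hT2 (by positivity) _
        have h0 : (0:ℝ) ≤ R - γ * (S - 1) := by nlinarith
        apply div_nonneg _ (by positivity)
        exact mul_nonneg (mul_nonneg (by nlinarith) hγ0) h0

/-! ### Alpha force -/

lemma force_alpha_eq {N : ℕ} (hN : (10000:ℝ) ≤ (N:ℝ)) (α β γ : ℝ) :
    -dLalpha N α β γ = (-dLbeta N α β γ) *
      (β * (2 * (N:ℝ) - 2) / (Real.exp α + 2 * (N:ℝ) - 2)) := by
  have hrpos := r_pos hN α β
  have hGpos := G_pos hN α
  rw [neg_dalpha_eq N α β γ (ne_of_gt hrpos) (ne_of_gt hGpos),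
    neg_dbeta_eq N α β γ (ne_of_gt hrpos)]
  field_simp

lemma force_alpha_nonneg {N : ℕ} (hN : (10000:ℝ) ≤ (N:ℝ)) {α β γ : ℝ} (hβ0 : 0 ≤ β)
    (hβ : β ≤ 3/2) (hγ0 : 0 ≤ γ) (hγ2 : γ ≤ 2) : 0 ≤ -dLalpha N α β γ := by
  rw [force_alpha_eq hN]
  apply mul_nonneg (force_beta_nonneg hN hβ hγ0 hγ2)
  apply div_nonneg _ (G_pos hN α).le
  apply mul_nonneg hβ0 (by linarith)

lemma force_alpha_le {N : ℕ} (hN : (10000:ℝ) ≤ (N:ℝ)) {α β γ : ℝ} (hβ0 : 0 ≤ β)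
    (hβ : β ≤ 3/2) (hγ0 : 0 ≤ γ) (hγ2 : γ ≤ 2) :
    -dLalpha N α β γ ≤ β * (-dLbeta N α β γ) := by
  rw [force_alpha_eq hN]
  have hGpos := G_pos hN α
  have hfac : β * (2 * (N:ℝ) - 2) / (Real.exp α + 2 * (N:ℝ) - 2) ≤ β := by
    rw [div_le_iff₀ hGpos]
    nlinarith [mul_nonneg hβ0 (Real.exp_pos α).le]
  have hbnn := force_beta_nonneg hN (α := α) hβ hγ0 hγ2
  calc (-dLbeta N α β γ) * (β * (2 * (N:ℝ) - 2) / (Real.exp α + 2 * (N:ℝ) - 2))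
      ≤ (-dLbeta N α β γ) * β := mul_le_mul_of_nonneg_left hfac hbnn
    _ = β * (-dLbeta N α β γ) := by ring

lemma force_alpha_ge {N : ℕ} (hN : (10000:ℝ) ≤ (N:ℝ)) {α β γ : ℝ} (hα0 : 0 ≤ α)
    (hα : α ≤ 3/2) (hβ0 : 0 ≤ β) (hβ : β ≤ 3/2) (hγ0 : 0 ≤ γ) (hγ2 : γ ≤ 2) :
    0.9 * (β * (-dLbeta N α β γ)) ≤ -dLalpha N α β γ := by
  rw [force_alpha_eq hN]
  have hGpos := G_pos hN α
  have hE := E_bounds hα0 hα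
  have hfac : 0.9 * β ≤ β * (2 * (N:ℝ) - 2) / (Real.exp α + 2 * (N:ℝ) - 2) := by
    rw [le_div_iff₀ hGpos]
    nlinarith [mul_nonneg hβ0 (by linarith : (0:ℝ) ≤ 0.2 * (N:ℝ) - 0.9 * Real.exp α - 0.2)]
  have hbnn := force_beta_nonneg hN (α := α) hβ hγ0 hγ2
  calc 0.9 * (β * (-dLbeta N α β γ)) = (-dLbeta N α β γ) * (0.9 * β) := by ring
    _ ≤ (-dLbeta N α β γ) * (β * (2 * (N:ℝ) - 2) / (Real.exp α + 2 * (N:ℝ) - 2)) :=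
        mul_le_mul_of_nonneg_left hfac hbnn

/-! ### Calculus helpers -/

open Filter Topology Set

lemma monoOn_of_hasDerivAt_nonneg {f F : ℝ → ℝ} {a b : ℝ}
    (hf : ∀ t ∈ Icc a b, HasDerivAt f (F t) t) (hF : ∀ t ∈ Icc a b, 0 ≤ F t) :
    MonotoneOn f (Icc a b) := by
  apply monotoneOn_of_deriv_nonneg (convex_Icc a b)
  · exact fun t ht => (hf t ht).continuousAt.continuousWithinAt
  · intro t ht
    rw [interior_Icc] at ht
    exact (hf t (Ioo_subset_Icc_self ht)).differentiableAt.differentiableWithinAt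
  · intro t ht
    rw [interior_Icc] at ht
    rw [(hf t (Ioo_subset_Icc_self ht)).deriv]
    exact hF t (Ioo_subset_Icc_self ht)

lemma incr_le {f F : ℝ → ℝ} {a b M : ℝ} (hab : a ≤ b)
    (hf : ∀ t ∈ Icc a b, HasDerivAt f (F t) t) (hF : ∀ t ∈ Icc a b, F t ≤ M) :
    f b - f a ≤ M * (b - a) := by
  have h : MonotoneOn (fun t => M * t - f t) (Icc a b) := by
    apply monoOn_of_hasDerivAt_nonneg (F := fun t => M - F t)
    · exact fun t ht => ((hasDerivAt_id' (x := t)).const_mul M).sub (hf t ht) |>.congr_deriv (by ring)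
    · exact fun t ht => by linarith [hF t ht]
  have h2 := h (left_mem_Icc.2 hab) (right_mem_Icc.2 hab) hab
  simp only at h2
  linarith

lemma incr_ge {f F : ℝ → ℝ} {a b m : ℝ} (hab : a ≤ b)
    (hf : ∀ t ∈ Icc a b, HasDerivAt f (F t) t) (hF : ∀ t ∈ Icc a b, m ≤ F t) :
    m * (b - a) ≤ f b - f a := by
  have h := incr_le (f := fun t => -f t) (F := fun t => -F t) (M := -m) hab
    (fun t ht => (hf t ht).neg) (fun t ht => by have := hF t ht; show -F t ≤ -m; linarith)
  linarith

lemma eventually_gt_right {f : ℝ → ℝ} {τ d : ℝ} (h : HasDerivAt f d τ) (hd : 0 < d) :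
    ∀ᶠ u in 𝓝[>] τ, f τ < f u := by
  have h1 : Tendsto (slope f τ) (𝓝[≠] τ) (𝓝 d) := hasDerivAt_iff_tendsto_slope.mp h
  have h2 : ∀ᶠ u in 𝓝[≠] τ, 0 < slope f τ u := h1.eventually_const_lt hd
  have hle : 𝓝[>] τ ≤ 𝓝[≠] τ := nhdsWithin_mono τ (fun u hu => ne_of_gt hu)
  filter_upwards [h2.filter_mono hle, self_mem_nhdsWithin] with u hu hu2
  have hut : τ < u := hu2
  rw [slope_def_field] at hu
  have := (div_pos_iff.mp hu)
  rcases this with ⟨h3, _⟩ | ⟨_, h4⟩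
  · linarith
  · linarith

lemma eventually_lt_right {f : ℝ → ℝ} {τ d : ℝ} (h : HasDerivAt f d τ) (hd : d < 0) :
    ∀ᶠ u in 𝓝[>] τ, f u < f τ := by
  have := eventually_gt_right (f := fun t => -f t) (h.neg) (by linarith)
  filter_upwards [this] with u hu
  have hu' : -f τ < -f u := hu
  linarith

lemma barrier_ge {g : ℝ → ℝ} {a T : ℝ}
    (hg : ∀ t ∈ Icc a T, ContinuousAt g t) (h0 : 0 ≤ g a)
    (hbar : ∀ t ∈ Icc a T, g t = 0 → (∀ u ∈ Icc a t, 0 ≤ g u) → ∀ᶠ u in 𝓝[>] t, 0 ≤ g u) :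
    ∀ t ∈ Icc a T, 0 ≤ g t := by
  by_contra hcon
  push_neg at hcon
  obtain ⟨t₀, ht₀, ht₀'⟩ := hcon
  set Sb := {t | t ∈ Icc a T ∧ g t < 0} with hSb
  have hne : Sb.Nonempty := ⟨t₀, ht₀, ht₀'⟩
  have hbdd : BddBelow Sb := ⟨a, fun t ht => ht.1.1⟩
  set τ := sInf Sb with hτ
  have hτmem : τ ∈ Icc a T :=
    ⟨le_csInf hne (fun t ht => ht.1.1), le_trans (csInf_le hbdd ⟨ht₀, ht₀'⟩) ht₀.2⟩
  have hgood : ∀ t ∈ Icc a T, t < τ → 0 ≤ g t := by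
    intro t ht hlt
    by_contra hneg
    push_neg at hneg
    exact absurd (csInf_le hbdd ⟨ht, hneg⟩) (not_le.2 hlt)
  have hgτ : 0 ≤ g τ := by
    by_contra hneg
    push_neg at hneg
    have hτa : a < τ := by
      rcases eq_or_lt_of_le hτmem.1 with h | h
      · exfalso; rw [← h] at hneg; linarith
      · exact h
    have hev : ∀ᶠ u in 𝓝[<] τ, g u < 0 :=
      (Filter.Tendsto.eventually_lt_const hneg (hg τ hτmem)).filter_mono nhdsWithin_le_nhds
    have hev2 : ∀ᶠ u in 𝓝[<] τ, a < u :=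
      (eventually_gt_nhds hτa).filter_mono nhdsWithin_le_nhds
    obtain ⟨u, ⟨hgu, hau⟩, huτ⟩ := ((hev.and hev2).and self_mem_nhdsWithin).exists
    have huτ' : u < τ := huτ
    exact absurd (hgood u ⟨le_of_lt hau, le_trans (le_of_lt huτ') hτmem.2⟩ huτ')
      (not_le.2 hgu)
  have hev : ∀ᶠ u in 𝓝[>] τ, 0 ≤ g u := by
    rcases eq_or_lt_of_le hgτ with heq | hlt
    · refine hbar τ hτmem heq.symm (fun u hu => ?_)
      rcases eq_or_lt_of_le hu.2 with h | h
      · rw [h]; exact hgτ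
      · exact hgood u ⟨hu.1, le_trans hu.2 hτmem.2⟩ h
    · exact ((Filter.Tendsto.eventually_const_lt hlt (hg τ hτmem)).filter_mono
        nhdsWithin_le_nhds).mono (fun u hu => le_of_lt hu)
  obtain ⟨u, huI, hsub⟩ := mem_nhdsGT_iff_exists_Ioo_subset.mp hev
  have hτu : τ < u := huI
  obtain ⟨t, htS, htu⟩ := exists_lt_of_csInf_lt hne hτu
  have hτt : τ ≤ t := csInf_le hbdd htS
  have htτ : τ ≠ t := fun h => by rw [← h] at htS; linarith [htS.2]
  exact absurd (hsub ⟨lt_of_le_of_ne hτt htτ, htu⟩) (not_le.2 htS.2)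

/-! ### Flow -/

structure Flow (N : ℕ) (A B Γ : ℝ → ℝ) : Prop where
  a0 : A 0 = 0
  b0 : B 0 = 0
  g0 : Γ 0 = 0
  da : ∀ t, 0 ≤ t → HasDerivAt A (-dLalpha N (A t) (B t) (Γ t)) t
  db : ∀ t, 0 ≤ t → HasDerivAt B (-dLbeta N (A t) (B t) (Γ t)) t
  dg : ∀ t, 0 ≤ t → HasDerivAt Γ (-dLgamma N (A t) (B t) (Γ t)) t

variable {N : ℕ} {A B Γ : ℝ → ℝ}

lemma derived (hF : Flow N A B Γ) (hN : (10000:ℝ) ≤ (N:ℝ)) {T : ℝ} (hT : 0 ≤ T)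
    (hB32 : ∀ t ∈ Icc (0:ℝ) T, B t ≤ 3/2)
    (hGood : ∀ t ∈ Icc (0:ℝ) T, 0 ≤ Γ t ∧ Γ t ≤ 2 ∧ A t ≤ 3/2) :
    ∀ t ∈ Icc (0:ℝ) T, 0 ≤ B t ∧ 0 ≤ A t ∧ A t ≤ B t ^ 2 / 2 ∧ 0.9 * (B t ^ 2 / 2) ≤ A t := by
  have hBmono : MonotoneOn B (Icc 0 T) :=
    monoOn_of_hasDerivAt_nonneg (fun t ht => hF.db t ht.1)
      (fun t ht => force_beta_nonneg hN (hB32 t ht) (hGood t ht).1 (hGood t ht).2.1)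
  have hB0 : ∀ t ∈ Icc (0:ℝ) T, 0 ≤ B t := fun t ht => by
    have h := hBmono (left_mem_Icc.2 hT) ht ht.1
    rw [hF.b0] at h; exact h
  have hAmono : MonotoneOn A (Icc 0 T) :=
    monoOn_of_hasDerivAt_nonneg (fun t ht => hF.da t ht.1)
      (fun t ht => force_alpha_nonneg hN (hB0 t ht) (hB32 t ht) (hGood t ht).1 (hGood t ht).2.1)
  have hA0 : ∀ t ∈ Icc (0:ℝ) T, 0 ≤ A t := fun t ht => by
    have h := hAmono (left_mem_Icc.2 hT) ht ht.1
    rw [hF.a0] at h; exact h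
  intro t ht
  have hmem : ∀ u ∈ Icc (0:ℝ) t, u ∈ Icc (0:ℝ) T := fun u hu => ⟨hu.1, le_trans hu.2 ht.2⟩
  have hder1 : ∀ u ∈ Icc (0:ℝ) t, HasDerivAt (fun y => B y ^ 2 / 2 - A y)
      (B u * (-dLbeta N (A u) (B u) (Γ u)) - (-dLalpha N (A u) (B u) (Γ u))) u := by
    intro u hu
    have h := (((hF.db u hu.1).pow 2).div_const 2).sub (hF.da u hu.1)
    refine h.congr_deriv ?_
    push_cast
    ring
  refine ⟨hB0 t ht, hA0 t ht, ?_, ?_⟩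
  · have key := incr_ge (m := 0) ht.1 hder1 (fun u hu => by
      have h1 := force_alpha_le (α := A u) (β := B u) (γ := Γ u) hN (hB0 u (hmem u hu)) (hB32 u (hmem u hu))
        (hGood u (hmem u hu)).1 (hGood u (hmem u hu)).2.1
      linarith)
    simp only [hF.a0, hF.b0] at key
    norm_num at key
    linarith
  · have hder2 : ∀ u ∈ Icc (0:ℝ) t, HasDerivAt (fun y => A y - 0.9 * (B y ^ 2 / 2))
        ((-dLalpha N (A u) (B u) (Γ u)) - 0.9 * (B u * (-dLbeta N (A u) (B u) (Γ u)))) u := by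
      intro u hu
      have h := (hF.da u hu.1).sub ((((hF.db u hu.1).pow 2).div_const 2).const_mul 0.9)
      refine h.congr_deriv ?_
      push_cast
      ring
    have key := incr_ge (m := 0) ht.1 hder2 (fun u hu => by
      have h1 := force_alpha_ge (α := A u) (β := B u) (γ := Γ u) hN (hA0 u (hmem u hu)) (hGood u (hmem u hu)).2.2
        (hB0 u (hmem u hu)) (hB32 u (hmem u hu)) (hGood u (hmem u hu)).1
        (hGood u (hmem u hu)).2.1
      linarith)
    simp only [hF.a0, hF.b0] at key
    norm_num at key
    linarith

lemma region (hF : Flow N A B Γ) (hN : (10000:ℝ) ≤ (N:ℝ)) {T : ℝ} (hT : 0 ≤ T)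
    (hB32 : ∀ t ∈ Icc (0:ℝ) T, B t ≤ 3/2) :
    ∀ t ∈ Icc (0:ℝ) T, 0 ≤ Γ t ∧ Γ t ≤ 2 ∧ A t ≤ 3/2 := by
  have hg : ∀ t ∈ Icc (0:ℝ) T, 0 ≤ min (Γ t) (min (2 - Γ t) (3/2 - A t)) := by
    apply barrier_ge
    · intro t ht
      exact ((hF.dg t ht.1).continuousAt).min
        ((continuousAt_const.sub (hF.dg t ht.1).continuousAt).min
          (continuousAt_const.sub (hF.da t ht.1).continuousAt))
    · rw [hF.g0, hF.a0]; norm_num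
    · intro t ht h0 hhist
      have hGood : ∀ u ∈ Icc (0:ℝ) t, 0 ≤ Γ u ∧ Γ u ≤ 2 ∧ A u ≤ 3/2 := by
        intro u hu
        have h := hhist u hu
        have h1 := le_min_iff.mp h
        have h2 := le_min_iff.mp h1.2
        exact ⟨h1.1, by linarith [h2.1], by linarith [h2.2]⟩
      have htt : t ∈ Icc (0:ℝ) t := right_mem_Icc.2 ht.1
      have hB32' : ∀ u ∈ Icc (0:ℝ) t, B u ≤ 3/2 := fun u hu =>
        hB32 u ⟨hu.1, le_trans hu.2 ht.2⟩
      have hder := derived hF hN ht.1 hB32' hGood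
      have hA0t : 0 ≤ A t := (hder t htt).2.1
      have hB0t : 0 ≤ B t := (hder t htt).1
      have hAt : A t ≤ 9/8 := by
        have h := (hder t htt).2.2.1
        have hBt := hB32' t htt
        nlinarith
      have e3 : ∀ᶠ u in 𝓝[>] t, 0 ≤ 3/2 - A u := by
        have h : ∀ᶠ u in 𝓝 t, A u < 3/2 :=
          Filter.Tendsto.eventually_lt_const (by linarith) (hF.da t ht.1).continuousAt
        exact (h.filter_mono nhdsWithin_le_nhds).mono (fun u hu => by linarith)
      have e1 : ∀ᶠ u in 𝓝[>] t, 0 ≤ Γ u := by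
        rcases eq_or_lt_of_le (hGood t htt).1 with hΓ0 | hΓpos
        · have hd : 0 < -dLgamma N (A t) (B t) (Γ t) := by
            rw [← hΓ0]; exact force_gamma_at0 hN _ _
          exact (eventually_gt_right (hF.dg t ht.1) hd).mono (fun u hu => by
            rw [← hΓ0] at hu; exact hu.le)
        · have h : ∀ᶠ u in 𝓝 t, 0 < Γ u :=
            Filter.Tendsto.eventually_const_lt hΓpos (hF.dg t ht.1).continuousAt
          exact (h.filter_mono nhdsWithin_le_nhds).mono (fun u hu => hu.le)
      have e2 : ∀ᶠ u in 𝓝[>] t, 0 ≤ 2 - Γ u := by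
        rcases eq_or_lt_of_le (hGood t htt).2.1 with hΓ2 | hΓlt
        · have hd : -dLgamma N (A t) (B t) (Γ t) < 0 := by
            rw [hΓ2]
            exact force_gamma_at2 hN hA0t (hGood t htt).2.2 hB0t (hB32' t htt)
          exact (eventually_lt_right (hF.dg t ht.1) hd).mono (fun u hu => by
            rw [hΓ2] at hu; linarith)
        · have h : ∀ᶠ u in 𝓝 t, Γ u < 2 :=
            Filter.Tendsto.eventually_lt_const hΓlt (hF.dg t ht.1).continuousAt
          exact (h.filter_mono nhdsWithin_le_nhds).mono (fun u hu => by linarith)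
      exact (e1.and (e2.and e3)).mono (fun u hu => le_min hu.1 (le_min hu.2.1 hu.2.2))
  intro t ht
  have h := hg t ht
  have h1 := le_min_iff.mp h
  have h2 := le_min_iff.mp h1.2
  exact ⟨h1.1, by linarith [h2.1], by linarith [h2.2]⟩

lemma gamma_hits (hF : Flow N A B Γ) (hN : (10000:ℝ) ≤ (N:ℝ)) {T : ℝ}
    (hT2 : 2 * (N:ℝ) ≤ T) (hB32 : ∀ t ∈ Icc (0:ℝ) T, B t ≤ 3/2) :
    ∃ tg ∈ Icc (0:ℝ) (2 * (N:ℝ)), 1/2 ≤ Γ tg := by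
  by_contra hcon
  push_neg at hcon
  have hNpos := N_pos hN
  have h2N : (0:ℝ) ≤ 2 * (N:ℝ) := by positivity
  have hT0 : 0 ≤ T := le_trans h2N hT2
  have hreg := region hF hN hT0 hB32
  have hder := derived hF hN hT0 hB32 hreg
  have hmem : ∀ u ∈ Icc (0:ℝ) (2 * (N:ℝ)), u ∈ Icc (0:ℝ) T :=
    fun u hu => ⟨hu.1, le_trans hu.2 hT2⟩
  have key := incr_ge (m := 1/(3*(N:ℝ))) h2N (fun u hu => hF.dg u hu.1)
    (fun u hu => force_gamma_ge hN (hder u (hmem u hu)).2.1 (hreg u (hmem u hu)).2.2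
      (hder u (hmem u hu)).1 (hB32 u (hmem u hu)) (hreg u (hmem u hu)).1
      (le_of_lt (hcon u hu)))
  rw [hF.g0] at key
  have hc := hcon (2 * (N:ℝ)) (right_mem_Icc.2 h2N)
  have heq : 1/(3*(N:ℝ)) * (2*(N:ℝ) - 0) = 2/3 := by field_simp; ring
  rw [heq] at key
  linarith

lemma gamma_persists (hF : Flow N A B Γ) (hN : (10000:ℝ) ≤ (N:ℝ)) {T tg : ℝ}
    (hT0 : 0 ≤ T) (htg : tg ∈ Icc (0:ℝ) T) (hΓtg : 1/2 ≤ Γ tg)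
    (hB32 : ∀ t ∈ Icc (0:ℝ) T, B t ≤ 3/2) : ∀ t ∈ Icc tg T, 1/2 ≤ Γ t := by
  have hreg := region hF hN hT0 hB32
  have hder := derived hF hN hT0 hB32 hreg
  have hsub : ∀ u ∈ Icc tg T, u ∈ Icc (0:ℝ) T := fun u hu => ⟨le_trans htg.1 hu.1, hu.2⟩
  have key := barrier_ge (g := fun t => Γ t - 1/2) (a := tg) (T := T)
    (fun t ht => ((hF.dg t (le_trans htg.1 ht.1)).continuousAt).sub continuousAt_const)
    (by linarith)
    (fun t ht heq _ => by
      have ht' := hsub t ht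
      have hΓt : Γ t = 1/2 := by linarith [heq]
      have hd : 0 < -dLgamma N (A t) (B t) (Γ t) := by
        rw [hΓt]
        exact force_gamma_athalf hN (hder t ht').2.1 (hreg t ht').2.2 (hder t ht').1
          (hB32 t ht')
      exact (eventually_gt_right (hF.dg t ht'.1) hd).mono (fun u hu => by
        linarith [hΓt ▸ hu]))
  intro t ht
  have := key t ht
  linarith

lemma beta_crosses (hF : Flow N A B Γ) (hN : (10000:ℝ) ≤ (N:ℝ)) :
    ∃ t, 0 ≤ t ∧ 3/2 ≤ B t := by
  by_contra hcon
  push_neg at hcon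
  have hNpos := N_pos hN
  set T := 2*(N:ℝ) + 9*(N:ℝ)^2 with hT_def
  have hT0 : (0:ℝ) ≤ T := by positivity
  have hB32 : ∀ t ∈ Icc (0:ℝ) T, B t ≤ 3/2 := fun t ht => (hcon t ht.1).le
  obtain ⟨tg, htg, hΓtg⟩ := gamma_hits hF hN (by nlinarith) hB32
  have htgT : tg ∈ Icc (0:ℝ) T := ⟨htg.1, by nlinarith [htg.2]⟩
  have hpers := gamma_persists hF hN hT0 htgT hΓtg hB32
  have hreg := region hF hN hT0 hB32
  have hder := derived hF hN hT0 hB32 hreg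
  have hsub : ∀ u ∈ Icc tg T, u ∈ Icc (0:ℝ) T := fun u hu => ⟨le_trans htg.1 hu.1, hu.2⟩
  have hkey := incr_ge (m := 1/(6*(N:ℝ)^2)) htgT.2
    (fun u hu => hF.db u (le_trans htg.1 hu.1))
    (fun u hu => force_beta_ge hN (hder u (hsub u hu)).2.1 (hreg u (hsub u hu)).2.2
      (hder u (hsub u hu)).1 (hB32 u (hsub u hu)) (hpers u hu) (hreg u (hsub u hu)).2.1)
  have h1 : 9*(N:ℝ)^2 ≤ T - tg := by nlinarith [htg.2]
  have h2 : (0:ℝ) ≤ B tg := (hder tg htgT).1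
  have h3 : (3:ℝ)/2 ≤ 1/(6*(N:ℝ)^2) * (T - tg) := by
    have heq : 1/(6*(N:ℝ)^2) * (9*(N:ℝ)^2) = 3/2 := by field_simp; ring
    have hmono := mul_le_mul_of_nonneg_left h1 (by positivity : (0:ℝ) ≤ 1/(6*(N:ℝ)^2))
    linarith
  have hfin := hcon T hT0
  linarith

lemma tau_exists (hF : Flow N A B Γ) (hN : (10000:ℝ) ≤ (N:ℝ)) :
    ∃ τ, 0 < τ ∧ B τ = 3/2 ∧ ∀ t ∈ Icc (0:ℝ) τ, B t ≤ 3/2 := by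
  set S := {t : ℝ | 0 ≤ t ∧ 3/2 ≤ B t} with hS_def
  have hne : S.Nonempty := beta_crosses hF hN
  have hbdd : BddBelow S := ⟨0, fun t ht => ht.1⟩
  have hclosed : IsClosed S := by
    have heq : S = Ici (0:ℝ) ∩ B ⁻¹' (Ici (3/2)) := by
      ext t; simp [hS_def, mem_Ici, and_comm]
    rw [heq]
    apply ContinuousOn.preimage_isClosed_of_isClosed _ isClosed_Ici isClosed_Ici
    exact fun t ht => (hF.db t ht).continuousAt.continuousWithinAt
  set τ := sInf S with hτ_def
  have hmem : τ ∈ S := hclosed.csInf_mem hne hbdd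
  have hτ0 : 0 ≤ τ := hmem.1
  have hτpos : 0 < τ := by
    rcases eq_or_lt_of_le hτ0 with h | h
    · exfalso
      have := hmem.2
      rw [← h] at this
      rw [hF.b0] at this
      linarith
    · exact h
  have hlt : ∀ t, 0 ≤ t → t < τ → B t < 3/2 := by
    intro t h0 hlt
    by_contra hge
    push_neg at hge
    exact absurd (csInf_le hbdd ⟨h0, hge⟩) (not_le.2 hlt)
  have hBτ : B τ ≤ 3/2 := by
    have hcw : ContinuousWithinAt B (Iio τ) τ :=
      (hF.db τ hτ0).continuousAt.continuousWithinAt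
    apply le_of_tendsto hcw
    filter_upwards [self_mem_nhdsWithin,
      (eventually_gt_nhds hτpos).filter_mono nhdsWithin_le_nhds] with u hu1 hu2
    exact (hlt u hu2.le hu1).le
  refine ⟨τ, hτpos, le_antisymm hBτ hmem.2, fun t ht => ?_⟩
  rcases eq_or_lt_of_le ht.2 with h | h
  · rw [h]; exact hBτ
  · exact (hlt t ht.1 h).le

end GF

open Set GF in
set_option maxHeartbeats 4000000 in
/-- For all sufficiently large `N` and every gradient-flow solution `(α, β, γ)` of `L_N`
with zero initialization, the emergence times `T_α, T_β, T_γ` are all finite (the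
corresponding sets are nonempty), satisfy `T_γ < T_β < T_α`, and obey
`c·N ≤ T_γ ≤ C·N`, `c·N² ≤ T_β ≤ C·N²`, and `c·N² ≤ T_α ≤ C·N²`;
in particular `T_γ = Θ(N)` and `T_β = T_α = Θ(N²)`. -/
theorem stmt18 :
    ∃ c C : ℝ, 0 < c ∧ 0 < C ∧ ∃ N₀ : ℕ, ∀ N : ℕ, N₀ ≤ N →
      ∀ A B Γ : ℝ → ℝ,
        A 0 = 0 → B 0 = 0 → Γ 0 = 0 →
        (∀ t : ℝ, 0 ≤ t → HasDerivAt A (-dLalpha N (A t) (B t) (Γ t)) t) →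
        (∀ t : ℝ, 0 ≤ t → HasDerivAt B (-dLbeta N (A t) (B t) (Γ t)) t) →
        (∀ t : ℝ, 0 ≤ t → HasDerivAt Γ (-dLgamma N (A t) (B t) (Γ t)) t) →
        ({t : ℝ | 0 ≤ t ∧ 1 / 2 ≤ A t}.Nonempty ∧
          {t : ℝ | 0 ≤ t ∧ 1 / 2 ≤ B t}.Nonempty ∧
          {t : ℝ | 0 ≤ t ∧ 1 / 2 ≤ Γ t}.Nonempty) ∧
        emergeTime Γ < emergeTime B ∧ emergeTime B < emergeTime A ∧
        c * (N : ℝ) ≤ emergeTime Γ ∧ emergeTime Γ ≤ C * (N : ℝ) ∧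
        c * (N : ℝ) ^ 2 ≤ emergeTime B ∧ emergeTime B ≤ C * (N : ℝ) ^ 2 ∧
        c * (N : ℝ) ^ 2 ≤ emergeTime A ∧ emergeTime A ≤ C * (N : ℝ) ^ 2 := by
  refine ⟨1/10, 10, by norm_num, by norm_num, 10000, ?_⟩
  intro N hN A B Γ ha0 hb0 hg0 hda hdb hdg
  have hF : Flow N A B Γ := ⟨ha0, hb0, hg0, hda, hdb, hdg⟩
  have hNr : (10000:ℝ) ≤ (N:ℝ) := by exact_mod_cast hN
  have hNpos : (0:ℝ) < (N:ℝ) := N_pos hNr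
  have hNne : (N:ℝ) ≠ 0 := ne_of_gt hNpos
  have hNsq : (0:ℝ) < (N:ℝ)^2 := by positivity
  have hNN : (10000:ℝ) * (N:ℝ) ≤ (N:ℝ)^2 := by nlinarith
  obtain ⟨τ, hτpos, hBτ, hBle⟩ := tau_exists hF hNr
  have hreg := region hF hNr hτpos.le hBle
  have hder := derived hF hNr hτpos.le hBle hreg
  have hBgrow : ∀ t ∈ Icc (0:ℝ) τ, B t ≤ 5/(N:ℝ)^2 * t := by
    intro t ht
    have hmem : ∀ u ∈ Icc (0:ℝ) t, u ∈ Icc (0:ℝ) τ := fun u hu => ⟨hu.1, le_trans hu.2 ht.2⟩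
    have key := incr_le (M := 5/(N:ℝ)^2) ht.1 (fun u hu => hF.db u hu.1)
      (fun u hu => force_beta_le hNr (hder u (hmem u hu)).2.1 (hreg u (hmem u hu)).2.2
        (hder u (hmem u hu)).1 (hBle u (hmem u hu)) (hreg u (hmem u hu)).1
        (hreg u (hmem u hu)).2.1)
    rw [hF.b0] at key
    linarith [key]
  have hΓgrow : ∀ t ∈ Icc (0:ℝ) τ, Γ t ≤ 2/(N:ℝ) * t := by
    intro t ht
    have hmem : ∀ u ∈ Icc (0:ℝ) t, u ∈ Icc (0:ℝ) τ := fun u hu => ⟨hu.1, le_trans hu.2 ht.2⟩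
    have key := incr_le (M := 2/(N:ℝ)) ht.1 (fun u hu => hF.dg u hu.1)
      (fun u hu => force_gamma_le hNr (hder u (hmem u hu)).2.1 (hreg u (hmem u hu)).2.2
        (hder u (hmem u hu)).1 (hBle u (hmem u hu)) (hreg u (hmem u hu)).1)
    rw [hF.g0] at key
    linarith [key]
  have hτlb : (3:ℝ)/10*(N:ℝ)^2 ≤ τ := by
    have h := hBgrow τ (right_mem_Icc.2 hτpos.le)
    rw [hBτ] at h
    have h2 : (3:ℝ)/2 * (N:ℝ)^2 ≤ 5 * τ := by
      have h3 := mul_le_mul_of_nonneg_right h hNsq.le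
      have heq : 5/(N:ℝ)^2 * τ * (N:ℝ)^2 = 5*τ := by field_simp
      linarith
    linarith
  have h2Nτ : 2*(N:ℝ) ≤ τ := by nlinarith
  obtain ⟨tg, htg2N, hΓtg⟩ := gamma_hits hF hNr h2Nτ hBle
  have htgτ : tg ∈ Icc (0:ℝ) τ := ⟨htg2N.1, le_trans htg2N.2 h2Nτ⟩
  have hpers := gamma_persists hF hNr hτpos.le htgτ hΓtg hBle
  have hτub : τ ≤ 10*(N:ℝ)^2 := by
    have hsub : ∀ u ∈ Icc tg τ, u ∈ Icc (0:ℝ) τ := fun u hu => ⟨le_trans htgτ.1 hu.1, hu.2⟩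
    have hk := incr_ge (m := 1/(6*(N:ℝ)^2)) htgτ.2
      (fun u hu => hF.db u (le_trans htgτ.1 hu.1))
      (fun u hu => force_beta_ge hNr (hder u (hsub u hu)).2.1 (hreg u (hsub u hu)).2.2
        (hder u (hsub u hu)).1 (hBle u (hsub u hu)) (hpers u hu) (hreg u (hsub u hu)).2.1)
    have h2 : (0:ℝ) ≤ B tg := (hder tg htgτ).1
    have h3 : 1/(6*(N:ℝ)^2)*(τ - tg) ≤ 3/2 := by rw [hBτ] at hk; linarith
    have h4 : τ - tg ≤ 9*(N:ℝ)^2 := by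
      have h5 := mul_le_mul_of_nonneg_right h3 (by positivity : (0:ℝ) ≤ 6*(N:ℝ)^2)
      have heq : 1/(6*(N:ℝ)^2)*(τ - tg)*(6*(N:ℝ)^2) = τ - tg := by field_simp
      linarith
    nlinarith [htg2N.2]
  have hbddA : BddBelow {t : ℝ | 0 ≤ t ∧ 1/2 ≤ A t} := ⟨0, fun t ht => ht.1⟩
  have hbddB : BddBelow {t : ℝ | 0 ≤ t ∧ 1/2 ≤ B t} := ⟨0, fun t ht => ht.1⟩
  have hbddΓ : BddBelow {t : ℝ | 0 ≤ t ∧ 1/2 ≤ Γ t} := ⟨0, fun t ht => ht.1⟩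
  have hAτhalf : 1/2 ≤ A τ := by
    have h := (hder τ (right_mem_Icc.2 hτpos.le)).2.2.2
    rw [hBτ] at h
    norm_num at h
    linarith
  have hneA : Set.Nonempty {t : ℝ | 0 ≤ t ∧ 1/2 ≤ A t} := ⟨τ, hτpos.le, hAτhalf⟩
  have hneB : Set.Nonempty {t : ℝ | 0 ≤ t ∧ 1/2 ≤ B t} :=
    ⟨τ, hτpos.le, by rw [hBτ]; norm_num⟩
  have hneΓ : Set.Nonempty {t : ℝ | 0 ≤ t ∧ 1/2 ≤ Γ t} := ⟨tg, htg2N.1, hΓtg⟩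
  have hEΓlb : (N:ℝ)/4 ≤ emergeTime Γ := by
    apply le_csInf hneΓ
    rintro t ⟨ht0, hΓt⟩
    rcases le_or_gt t τ with hle | hgt
    · have h := hΓgrow t ⟨ht0, hle⟩
      have h3 := mul_le_mul_of_nonneg_right (le_trans hΓt h) hNpos.le
      have heq : 2/(N:ℝ)*t*(N:ℝ) = 2*t := by field_simp
      linarith
    · nlinarith
  have hEΓub : emergeTime Γ ≤ 2*(N:ℝ) :=
    le_trans (csInf_le hbddΓ ⟨htg2N.1, hΓtg⟩) htg2N.2
  have hEBlb : (N:ℝ)^2/10 ≤ emergeTime B := by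
    apply le_csInf hneB
    rintro t ⟨ht0, hBt⟩
    rcases le_or_gt t τ with hle | hgt
    · have h := hBgrow t ⟨ht0, hle⟩
      have h3 := mul_le_mul_of_nonneg_right (le_trans hBt h) hNsq.le
      have heq : 5/(N:ℝ)^2*t*(N:ℝ)^2 = 5*t := by field_simp
      linarith
    · linarith
  have hEBub : emergeTime B ≤ τ := csInf_le hbddB ⟨hτpos.le, by rw [hBτ]; norm_num⟩
  have hEAub : emergeTime A ≤ τ := csInf_le hbddA ⟨hτpos.le, hAτhalf⟩
  have hEAlb : (N:ℝ)^2/10 ≤ emergeTime A := by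
    apply le_csInf hneA
    rintro t ⟨ht0, hAt⟩
    rcases le_or_gt t τ with hle | hgt
    · have h1 : A t ≤ B t^2/2 := (hder t ⟨ht0, hle⟩).2.2.1
      have h2 : 0 ≤ B t := (hder t ⟨ht0, hle⟩).1
      have h3 : 1 ≤ B t := by nlinarith
      have h4 := hBgrow t ⟨ht0, hle⟩
      have h5 := mul_le_mul_of_nonneg_right (le_trans h3 h4) hNsq.le
      have heq : 5/(N:ℝ)^2*t*(N:ℝ)^2 = 5*t := by field_simp
      linarith
    · linarith
  have hEB0 : 0 ≤ emergeTime B := le_csInf hneB (fun t ht => ht.1)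
  have hEBpos : 0 < emergeTime B := by nlinarith
  have hBnotyet : ∀ u, 0 ≤ u → u < emergeTime B → B u < 1/2 := by
    intro u h0 hu
    by_contra hge
    push_neg at hge
    exact absurd (csInf_le hbddB ⟨h0, hge⟩) (not_le.2 hu)
  have hBEB : B (emergeTime B) ≤ 1/2 := by
    have hcw : ContinuousWithinAt B (Iio (emergeTime B)) (emergeTime B) :=
      (hF.db _ hEB0).continuousAt.continuousWithinAt
    apply le_of_tendsto hcw
    filter_upwards [self_mem_nhdsWithin,
      (eventually_gt_nhds hEBpos).filter_mono nhdsWithin_le_nhds] with u hu1 hu2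
    exact (hBnotyet u hu2.le hu1).le
  have hkeyA : ∀ t ∈ {t : ℝ | 0 ≤ t ∧ 1/2 ≤ A t}, emergeTime B + (N:ℝ)^2/10 ≤ t := by
    rintro t ⟨ht0, hAt⟩
    have main : ∀ s, emergeTime B ≤ s → s ≤ τ → 1 ≤ B s →
        emergeTime B + (N:ℝ)^2/10 ≤ s := by
      intro s hs1 hs2 hs3
      have hmem : ∀ u ∈ Icc (emergeTime B) s, u ∈ Icc (0:ℝ) τ :=
        fun u hu => ⟨le_trans hEB0 hu.1, le_trans hu.2 hs2⟩
      have hk := incr_le (M := 5/(N:ℝ)^2) hs1 (fun u hu => hF.db u (le_trans hEB0 hu.1))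
        (fun u hu => force_beta_le hNr (hder u (hmem u hu)).2.1 (hreg u (hmem u hu)).2.2
          (hder u (hmem u hu)).1 (hBle u (hmem u hu)) (hreg u (hmem u hu)).1
          (hreg u (hmem u hu)).2.1)
      have h6 : 1/2 ≤ 5/(N:ℝ)^2*(s - emergeTime B) := by linarith
      have h7 := mul_le_mul_of_nonneg_right h6 hNsq.le
      have heq : 5/(N:ℝ)^2*(s - emergeTime B)*(N:ℝ)^2 = 5*(s - emergeTime B) := by field_simp
      linarith
    rcases le_or_gt t τ with hle | hgt
    · have h1 : A t ≤ B t^2/2 := (hder t ⟨ht0, hle⟩).2.2.1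
      have h2 : 0 ≤ B t := (hder t ⟨ht0, hle⟩).1
      have h3 : 1 ≤ B t := by nlinarith
      have hEBt : emergeTime B ≤ t := csInf_le hbddB ⟨ht0, by linarith⟩
      exact main t hEBt hle h3
    · have := main τ hEBub le_rfl (by rw [hBτ]; norm_num)
      linarith
  have hEAgtB : emergeTime B < emergeTime A := by
    have h : emergeTime B + (N:ℝ)^2/10 ≤ emergeTime A := le_csInf hneA hkeyA
    linarith
  have hEΓltB : emergeTime Γ < emergeTime B := by linarith
  refine ⟨⟨hneA, hneB, hneΓ⟩, hEΓltB, hEAgtB, ?_, ?_, ?_, ?_, ?_, ?_⟩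
  · linarith
  · linarith
  · linarith
  · linarith
  · linarith
  · linarith
end
end
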